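/- arXiv:2303.02740 — 7 statements merged into one kernel-verified Lean document; each statement's English description precedes it below -/
import Mathlib

section
/- There exist ε₀ > 0 and C > 0, depending only on ‖θ‖∞, the Lipschitz constant of θ, ‖β‖∞ and the Lipschitz constant of β, such that for all ε ∈ (0, ε₀], all u ∈ ℝ, all v ∈ ℝⁿ, and every Ψ ∈ ℝⁿ satisfying Ψ = v + u·θ(Ψ)/B^ε(Ψ), one has |Ψ − v| ≤ 2‖θ‖∞·|u| and |Ψ − v − u·θ(v)| ≤ C(u² + ε|u|). -/
/- STATEMENT 4: There exist ε₀ > 0 and C > 0, depending only on ‖θ‖∞, the Lipschitz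
constant of θ, ‖β‖∞ and the Lipschitz constant of β, such that for all ε ∈ (0, ε₀], all
u ∈ ℝ, all v ∈ ℝⁿ and every Ψ satisfying Ψ = v + u·θ(Ψ)/B^ε(Ψ), one has
|Ψ − v| ≤ 2‖θ‖∞·|u| and |Ψ − v − u·θ(v)| ≤ C(u² + ε|u|),
where B^ε(y) = (1 − εβ(y))/(1 + εβ(y)). -/
theorem stmt_4 (n : ℕ) (hn : 1 ≤ n)
    (β : EuclideanSpace ℝ (Fin n) → ℝ) (Kβ : ℝ)
    (hβbd : BddAbove (Set.range fun y => |β y|))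
    (hβL : LipschitzWith (Real.toNNReal Kβ) β)
    (θ : EuclideanSpace ℝ (Fin n) → EuclideanSpace ℝ (Fin n)) (Kθ : ℝ)
    (hθbd : BddAbove (Set.range fun y => ‖θ y‖))
    (hθL : LipschitzWith (Real.toNNReal Kθ) θ) :
    ∃ ε₀ > 0, ∃ C > 0, ε₀ * (⨆ y, |β y|) ≤ 1 / 2 ∧
      ∀ ε : ℝ, 0 < ε → ε ≤ ε₀ →
        ∀ (u : ℝ) (v Ψ : EuclideanSpace ℝ (Fin n)),
          Ψ = v + (u / ((1 - ε * β Ψ) / (1 + ε * β Ψ))) • θ Ψ →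
          ‖Ψ - v‖ ≤ 2 * (⨆ y, ‖θ y‖) * |u| ∧
          ‖Ψ - v - u • θ v‖ ≤ C * (u ^ 2 + ε * |u|) := by
  set Mβ := ⨆ y, |β y| with hMβdef
  set Mθ := ⨆ y, ‖θ y‖ with hMθdef
  have hβle : ∀ y, |β y| ≤ Mβ := fun y => le_ciSup hβbd y
  have hθle : ∀ y, ‖θ y‖ ≤ Mθ := fun y => le_ciSup hθbd y
  have hMβ0 : 0 ≤ Mβ := le_trans (abs_nonneg _) (hβle 0)
  have hMθ0 : 0 ≤ Mθ := le_trans (norm_nonneg _) (hθle 0)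
  set K : ℝ := (Real.toNNReal Kθ : ℝ) with hKdef
  have hK0 : 0 ≤ K := (Real.toNNReal Kθ).2
  have hε₀Mβ : (1 / (3 * (Mβ + 1))) * Mβ ≤ 1 / 3 := by
    rw [div_mul_eq_mul_div, one_mul, div_le_div_iff₀ (by positivity) (by norm_num)]
    nlinarith
  refine ⟨1 / (3 * (Mβ + 1)), by positivity, 4*K*Mθ + 3*Mβ*Mθ + 1, by positivity,
    by linarith, ?_⟩
  intro ε hε hεle u v Ψ hΨ
  have hεMβ : ε * Mβ ≤ 1 / 3 :=
    le_trans (mul_le_mul_of_nonneg_right hεle hMβ0) hε₀Mβ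
  set b := β Ψ with hbdef
  have hb : |b| ≤ Mβ := hβle Ψ
  have hεb : |ε * b| ≤ 1 / 3 := by
    rw [abs_mul, abs_of_pos hε]
    calc ε * |b| ≤ ε * Mβ := mul_le_mul_of_nonneg_left hb hε.le
    _ ≤ 1 / 3 := hεMβ
  have hεb' := abs_le.mp hεb
  set D1 := 1 - ε * b with hD1def
  set D2 := 1 + ε * b with hD2def
  have hD1 : 2/3 ≤ D1 := by simp only [hD1def]; linarith [hεb'.2]
  have hD2 : 2/3 ≤ D2 := by simp only [hD2def]; linarith [hεb'.1]
  have hD1' : D1 ≤ 4/3 := by simp only [hD1def]; linarith [hεb'.1]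
  have hD2' : D2 ≤ 4/3 := by simp only [hD2def]; linarith [hεb'.2]
  have hD1pos : 0 < D1 := by linarith
  have hD2pos : 0 < D2 := by linarith
  have hBpos : 0 < D1 / D2 := by positivity
  have hBlo : 1/2 ≤ D1 / D2 := by rw [le_div_iff₀ hD2pos]; linarith
  set r : ℝ := u / (D1 / D2) with hrdef
  have hr : |r| ≤ 2 * |u| := by
    rw [hrdef, abs_div, abs_of_pos hBpos, div_le_iff₀ hBpos]
    have := mul_le_mul_of_nonneg_left hBlo (by positivity : (0:ℝ) ≤ 2 * |u|)
    linarith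
  have hΨv : Ψ - v = r • θ Ψ := by
    nth_rewrite 1 [hΨ]; abel
  have h1 : ‖Ψ - v‖ ≤ 2 * Mθ * |u| := by
    rw [hΨv, norm_smul, Real.norm_eq_abs]
    have := mul_le_mul hr (hθle Ψ) (norm_nonneg (θ Ψ))
      (by positivity : (0:ℝ) ≤ 2 * |u|)
    linarith
  refine ⟨by linarith, ?_⟩
  -- second estimate
  have hdecomp : Ψ - v - u • θ v = r • (θ Ψ - θ v) + (r - u) • θ v := by
    rw [hΨv]; rw [smul_sub, sub_smul]; abel
  have hLip : ‖θ Ψ - θ v‖ ≤ K * ‖Ψ - v‖ := by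
    have := hθL.dist_le_mul Ψ v
    rwa [dist_eq_norm, dist_eq_norm] at this
  have hA : |r| * ‖θ Ψ - θ v‖ ≤ 4 * K * Mθ * u ^ 2 := by
    have h3 : ‖θ Ψ - θ v‖ ≤ K * (2 * Mθ * |u|) :=
      le_trans hLip (mul_le_mul_of_nonneg_left h1 hK0)
    calc |r| * ‖θ Ψ - θ v‖ ≤ (2 * |u|) * (K * (2 * Mθ * |u|)) :=
          mul_le_mul hr h3 (norm_nonneg _) (by positivity)
      _ = 4 * K * Mθ * (|u| * |u|) := by ring
      _ = 4 * K * Mθ * u ^ 2 := by rw [abs_mul_abs_self, sq]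
  have hru : r - u = u * (2 * (ε * b)) / D1 := by
    rw [hrdef]
    field_simp
    ring
  have hruabs : |r - u| ≤ 3 * ε * Mβ * |u| := by
    rw [hru, abs_div, abs_of_pos hD1pos, div_le_iff₀ hD1pos]
    have h4 : |u * (2 * (ε * b))| = |u| * (2 * (ε * |b|)) := by
      rw [abs_mul, abs_mul, abs_mul, abs_of_pos hε, abs_two]
    rw [h4]
    have e0 : ε * |b| ≤ ε * Mβ := mul_le_mul_of_nonneg_left hb hε.le
    have e1 : ε * |b| * |u| ≤ ε * Mβ * |u| :=
      mul_le_mul_of_nonneg_right e0 (abs_nonneg u)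
    have e2 : (ε * Mβ * |u|) * 2 ≤ (ε * Mβ * |u|) * (3 * D1) :=
      mul_le_mul_of_nonneg_left (by linarith)
        (mul_nonneg (mul_nonneg hε.le hMβ0) (abs_nonneg u))
    calc |u| * (2 * (ε * |b|)) = (ε * |b| * |u|) * 2 := by ring
      _ ≤ (ε * Mβ * |u|) * 2 := by linarith
      _ ≤ (ε * Mβ * |u|) * (3 * D1) := e2
      _ = 3 * ε * Mβ * |u| * D1 := by ring
  have hBnd : |r - u| * ‖θ v‖ ≤ 3 * Mβ * Mθ * (ε * |u|) := by
    calc |r - u| * ‖θ v‖ ≤ (3 * ε * Mβ * |u|) * Mθ :=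
          mul_le_mul hruabs (hθle v) (norm_nonneg _) (by positivity)
      _ = 3 * Mβ * Mθ * (ε * |u|) := by ring
  have htot : ‖Ψ - v - u • θ v‖ ≤ 4 * K * Mθ * u ^ 2 + 3 * Mβ * Mθ * (ε * |u|) := by
    calc ‖Ψ - v - u • θ v‖ = ‖r • (θ Ψ - θ v) + (r - u) • θ v‖ := by rw [hdecomp]
      _ ≤ ‖r • (θ Ψ - θ v)‖ + ‖(r - u) • θ v‖ := norm_add_le _ _
      _ = |r| * ‖θ Ψ - θ v‖ + |r - u| * ‖θ v‖ := by
          rw [norm_smul, norm_smul, Real.norm_eq_abs, Real.norm_eq_abs]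
      _ ≤ 4 * K * Mθ * u ^ 2 + 3 * Mβ * Mθ * (ε * |u|) := add_le_add hA hBnd
  have hεu : 0 ≤ ε * |u| := mul_nonneg hε.le (abs_nonneg u)
  have hMM : 0 ≤ Mβ * Mθ := mul_nonneg hMβ0 hMθ0
  have hKM : 0 ≤ K * Mθ := mul_nonneg hK0 hMθ0
  have c1 : 4 * K * Mθ * u ^ 2 ≤ (4*K*Mθ + 3*Mβ*Mθ + 1) * u ^ 2 :=
    mul_le_mul_of_nonneg_right (by linarith [hMM]) (sq_nonneg u)
  have c2 : 3 * Mβ * Mθ * (ε * |u|) ≤ (4*K*Mθ + 3*Mβ*Mθ + 1) * (ε * |u|) :=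
    mul_le_mul_of_nonneg_right (by linarith [hKM]) hεu
  calc ‖Ψ - v - u • θ v‖ ≤ 4 * K * Mθ * u ^ 2 + 3 * Mβ * Mθ * (ε * |u|) := htot
    _ ≤ (4*K*Mθ + 3*Mβ*Mθ + 1) * u ^ 2 + (4*K*Mθ + 3*Mβ*Mθ + 1) * (ε * |u|) :=
        add_le_add c1 c2
    _ = (4*K*Mθ + 3*Mβ*Mθ + 1) * (u ^ 2 + ε * |u|) := by ring
end

section
/- For every A > 0 there exist C > 0 and ε₀ > 0 such that for all ε ∈ (0, ε₀] and all (x, y) ∈ [−Aε, Aε] × ℝⁿ, setting u = F^ε(x,y) and v = G(x,y): (i) if x ≤ 0 then u = x; (ii) |y − v − u·θ(v)| ≤ Cε²; (iii) if x > 0 then |x − u·(1 + 2εβ(v))| ≤ Cε³. -/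
/-- `B^ε(y) = (1 − εβ(y))/(1 + εβ(y))`. -/
noncomputable def Beps {n : ℕ} (β : EuclideanSpace ℝ (Fin n) → ℝ) (ε : ℝ)
    (y : EuclideanSpace ℝ (Fin n)) : ℝ :=
  (1 - ε * β y) / (1 + ε * β y)

/-- `F^ε(x,y) = x + x⁺·(B^ε(y) − 1)`. -/
noncomputable def Feps {n : ℕ} (β : EuclideanSpace ℝ (Fin n) → ℝ) (ε : ℝ)
    (x : ℝ) (y : EuclideanSpace ℝ (Fin n)) : ℝ :=
  x + max x 0 * (Beps β ε y - 1)

/-- `G(x,y) = y − x·θ(y)`. -/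
noncomputable def Gfun {n : ℕ}
    (θ : EuclideanSpace ℝ (Fin n) → EuclideanSpace ℝ (Fin n))
    (x : ℝ) (y : EuclideanSpace ℝ (Fin n)) : EuclideanSpace ℝ (Fin n) :=
  y - x • θ y

/-!
For `x ≤ 0` the map `F^ε` is the identity. Otherwise `u = x B^ε(y)` and, with `t = εβ(y)`,
`s = εβ(v)`, one has the exact identity `x - x·(1-t)/(1+t)·(1+2s) = 2x(t - s + ts)/(1+t)`.
Since `|x| ≤ Aε`, `|y - v| = |x|·|θ(y)| = O(ε)`, so by the Lipschitz bound on `β` both `t - s`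
and `ts` are `O(ε²)`, which gives (iii). For (ii), `y - v - uθ(v) = x(θ(y) - θ(v)) + (x - u)θ(v)`
where `|x - u| = O(|x|ε)` and `θ` is Lipschitz. Taking `ε₀ = 1/(2(M+1))` with `|β| ≤ M` keeps
`|εβ| ≤ 1/2`, so all denominators `1 + εβ` stay above `1/2`.
-/

open Set

theorem exists_lipschitzWith_of_bddAbove_norm_fderiv {E F : Type*} [NormedAddCommGroup E]
    [NormedSpace ℝ E] [NormedAddCommGroup F] [NormedSpace ℝ F] {f : E → F}
    (hf : Differentiable ℝ f) (h : BddAbove (range fun y => ‖fderiv ℝ f y‖)) :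
    ∃ K, LipschitzWith K f := by
  obtain ⟨L, hL⟩ := h
  refine ⟨L.toNNReal, lipschitzWith_of_nnnorm_fderiv_le hf fun y => ?_⟩
  rw [← NNReal.coe_le_coe, coe_nnnorm]
  exact (hL ⟨y, rfl⟩).trans (Real.le_coe_toNNReal L)

theorem exists_nonneg_bound_of_bddAbove_range {ι : Type*} [Nonempty ι] {g : ι → ℝ}
    (hg : ∀ i, 0 ≤ g i) (h : BddAbove (range g)) : ∃ M ≥ 0, ∀ i, g i ≤ M := by
  obtain ⟨M, hM⟩ := h
  have hgM : ∀ i, g i ≤ M := fun i => hM ⟨i, rfl⟩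
  exact ⟨M, (hg (Classical.arbitrary ι)).trans (hgM _), hgM⟩

theorem abs_one_sub_div_one_add_sub_one_le {t : ℝ} (ht : |t| ≤ 1 / 2) :
    |(1 - t) / (1 + t) - 1| ≤ 4 * |t| := by
  have hpos : 1 / 2 ≤ 1 + t := by linarith [neg_abs_le t]
  have hid : (1 - t) / (1 + t) - 1 = -(2 * t) / (1 + t) := by
    field_simp
    ring
  rw [hid, abs_div, abs_of_pos (show (0 : ℝ) < 1 + t by linarith), div_le_iff₀ (by linarith),
    abs_neg, abs_mul, abs_two]
  nlinarith [abs_nonneg t]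

theorem abs_sub_mul_one_sub_div_one_add_mul_le {t s x : ℝ} (ht : |t| ≤ 1 / 2) :
    |x - x * ((1 - t) / (1 + t)) * (1 + 2 * s)| ≤ 4 * |x| * (|t - s| + |t| * |s|) := by
  have hpos : 1 / 2 ≤ 1 + t := by linarith [neg_abs_le t]
  have hid : x - x * ((1 - t) / (1 + t)) * (1 + 2 * s) = 2 * x * (t - s + t * s) / (1 + t) := by
    field_simp
    ring
  have hnum : |2 * x * (t - s + t * s)| ≤ 2 * |x| * (|t - s| + |t| * |s|) := by
    rw [abs_mul, abs_mul, abs_two, ← abs_mul t s]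
    gcongr
    exact abs_add_le _ _
  rw [hid, abs_div, abs_of_pos (show (0 : ℝ) < 1 + t by linarith), div_le_iff₀ (by linarith)]
  nlinarith [abs_nonneg (2 * x * (t - s + t * s)), abs_nonneg x,
    add_nonneg (abs_nonneg (t - s)) (mul_nonneg (abs_nonneg t) (abs_nonneg s))]

section

variable {n : ℕ} (β : EuclideanSpace ℝ (Fin n) → ℝ)
  (θ : EuclideanSpace ℝ (Fin n) → EuclideanSpace ℝ (Fin n))
  {ε x M T : ℝ} {y : EuclideanSpace ℝ (Fin n)}

theorem Feps_of_nonpos (hx : x ≤ 0) : Feps β ε x y = x := by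
  simp [Feps, max_eq_right hx]

theorem Feps_of_nonneg (hx : 0 ≤ x) : Feps β ε x y = x * Beps β ε y := by
  rw [Feps, max_eq_left hx]
  ring

theorem abs_eps_mul_le_half (hε : 0 ≤ ε) (hεM : ε * M ≤ 1 / 2) (hy : |β y| ≤ M) :
    |ε * β y| ≤ 1 / 2 := by
  rw [abs_mul, abs_of_nonneg hε]
  nlinarith

theorem abs_Feps_sub_le (hε : 0 ≤ ε) (hεM : ε * M ≤ 1 / 2) (hy : |β y| ≤ M) :
    |Feps β ε x y - x| ≤ |x| * (4 * ε * M) := by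
  have hB : |Beps β ε y - 1| ≤ 4 * ε * M := by
    calc |Beps β ε y - 1| ≤ 4 * |ε * β y| :=
          abs_one_sub_div_one_add_sub_one_le (abs_eps_mul_le_half β hε hεM hy)
      _ ≤ 4 * ε * M := by
          rw [abs_mul, abs_of_nonneg hε]
          nlinarith
  have hmax : |max x 0| ≤ |x| :=
    abs_max_le_max_abs_abs.trans (by simp)
  rw [show Feps β ε x y - x = max x 0 * (Beps β ε y - 1) by rw [Feps]; ring, abs_mul]
  exact mul_le_mul hmax hB (abs_nonneg _) (abs_nonneg _)

theorem sub_Gfun (x : ℝ) (y : EuclideanSpace ℝ (Fin n)) : y - Gfun θ x y = x • θ y := by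
  simp [Gfun]

theorem norm_sub_Gfun_le (hT : ∀ z, ‖θ z‖ ≤ T) : ‖y - Gfun θ x y‖ ≤ |x| * T := by
  rw [sub_Gfun, norm_smul, Real.norm_eq_abs]
  exact mul_le_mul_of_nonneg_left (hT y) (abs_nonneg x)

theorem norm_sub_Gfun_sub_smul_le {K : NNReal} (hθ : LipschitzWith K θ) (hT : ∀ z, ‖θ z‖ ≤ T)
    (u : ℝ) :
    ‖y - Gfun θ x y - u • θ (Gfun θ x y)‖ ≤ K * |x| ^ 2 * T + |x - u| * T := by
  set v := Gfun θ x y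
  have hsplit : y - v - u • θ v = x • (θ y - θ v) + (x - u) • θ v := by
    rw [smul_sub, sub_smul, ← sub_Gfun θ x y]
    abel
  have hθyv : ‖θ y - θ v‖ ≤ K * (|x| * T) :=
    (hθ.norm_sub_le y v).trans (mul_le_mul_of_nonneg_left (norm_sub_Gfun_le θ hT) K.2)
  rw [hsplit]
  calc ‖x • (θ y - θ v) + (x - u) • θ v‖
      ≤ |x| * ‖θ y - θ v‖ + |x - u| * ‖θ v‖ := by
        simpa only [norm_smul, Real.norm_eq_abs] using
          norm_add_le (x • (θ y - θ v)) ((x - u) • θ v)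
    _ ≤ |x| * (K * (|x| * T)) + |x - u| * T := by
        gcongr
        exact hT v
    _ = K * |x| ^ 2 * T + |x - u| * T := by ring

theorem abs_sub_Feps_mul_le {K : NNReal} (hβ : LipschitzWith K β) (hT : ∀ z, ‖θ z‖ ≤ T)
    (hε : 0 ≤ ε) (hεM : ε * M ≤ 1 / 2) (hM : ∀ z, |β z| ≤ M) (hx : 0 ≤ x) :
    |x - Feps β ε x y * (1 + 2 * ε * β (Gfun θ x y))|
      ≤ 4 * |x| * ε * (K * (|x| * T) + ε * M ^ 2) := by
  set v := Gfun θ x y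
  have hβyv : |β y - β v| ≤ K * (|x| * T) := by
    simpa only [Real.norm_eq_abs] using
      (hβ.norm_sub_le y v).trans (mul_le_mul_of_nonneg_left (norm_sub_Gfun_le θ hT) K.2)
  have hts : |ε * β y - ε * β v| + |ε * β y| * |ε * β v| ≤ ε * (K * (|x| * T) + ε * M ^ 2) := by
    rw [← mul_sub, abs_mul, abs_mul, abs_mul, abs_of_nonneg hε]
    have hprod : |β y| * |β v| ≤ M ^ 2 := by
      nlinarith [hM y, hM v, abs_nonneg (β y), abs_nonneg (β v)]
    nlinarith [mul_le_mul_of_nonneg_left hβyv hε, mul_le_mul_of_nonneg_left hprod (sq_nonneg ε)]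
  rw [Feps_of_nonneg β hx, mul_assoc 2 ε]
  calc |x - x * Beps β ε y * (1 + 2 * (ε * β v))|
      ≤ 4 * |x| * (|ε * β y - ε * β v| + |ε * β y| * |ε * β v|) :=
        abs_sub_mul_one_sub_div_one_add_mul_le (abs_eps_mul_le_half β hε hεM (hM y))
    _ ≤ 4 * |x| * (ε * (K * (|x| * T) + ε * M ^ 2)) := by gcongr
    _ = 4 * |x| * ε * (K * (|x| * T) + ε * M ^ 2) := by ring

end

theorem stmt_6_general (n : ℕ)
    (β : EuclideanSpace ℝ (Fin n) → ℝ)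
    (hβ : ContDiff ℝ 1 β)
    (hβbd : BddAbove (Set.range fun y => |β y|))
    (hβ'bd : BddAbove (Set.range fun y => ‖fderiv ℝ β y‖))
    (θ : EuclideanSpace ℝ (Fin n) → EuclideanSpace ℝ (Fin n))
    (hθ : ContDiff ℝ 1 θ)
    (hθbd : BddAbove (Set.range fun y => ‖θ y‖))
    (hθ'bd : BddAbove (Set.range fun y => ‖fderiv ℝ θ y‖)) :
    ∀ A > 0, ∃ C > 0, ∃ ε₀ > 0, ∀ ε : ℝ, 0 < ε → ε ≤ ε₀ →
      ∀ x : ℝ, x ∈ Set.Icc (-(A * ε)) (A * ε) → ∀ y : EuclideanSpace ℝ (Fin n),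
        (x ≤ 0 → Feps β ε x y = x) ∧
        ‖y - Gfun θ x y - Feps β ε x y • θ (Gfun θ x y)‖ ≤ C * ε ^ 2 ∧
        (0 < x →
          |x - Feps β ε x y * (1 + 2 * ε * β (Gfun θ x y))| ≤ C * ε ^ 3) := by
  intro A hA
  obtain ⟨M, hM0, hM⟩ := exists_nonneg_bound_of_bddAbove_range (fun _ => abs_nonneg _) hβbd
  obtain ⟨T, hT0, hT⟩ := exists_nonneg_bound_of_bddAbove_range (fun _ => norm_nonneg _) hθbd
  obtain ⟨Kβ, hKβ⟩ :=
    exists_lipschitzWith_of_bddAbove_norm_fderiv (hβ.differentiable one_ne_zero) hβ'bd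
  obtain ⟨Kθ, hKθ⟩ :=
    exists_lipschitzWith_of_bddAbove_norm_fderiv (hθ.differentiable one_ne_zero) hθ'bd
  refine ⟨Kθ * A ^ 2 * T + 4 * A * M * T + 4 * A * (Kβ * A * T + M ^ 2) + 1, by positivity,
    1 / (2 * (M + 1)), by positivity, fun ε hε hε₀ x hx y => ?_⟩
  have hε0 : 0 ≤ ε := hε.le
  have hεM : ε * M ≤ 1 / 2 := by
    calc ε * M ≤ 1 / (2 * (M + 1)) * M := mul_le_mul_of_nonneg_right hε₀ hM0
      _ ≤ 1 / 2 := by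
          rw [div_mul_eq_mul_div, div_le_div_iff₀ (by positivity) two_pos]
          linarith
  have hxA : |x| ≤ A * ε := abs_le.mpr hx
  have hCβ : 0 ≤ 4 * A * (Kβ * A * T + M ^ 2) := by positivity
  have hCθ : 0 ≤ Kθ * A ^ 2 * T + 4 * A * M * T := by positivity
  refine ⟨Feps_of_nonpos β, ?_, fun hx0 => ?_⟩
  · have hux : |x - Feps β ε x y| ≤ A * ε * (4 * ε * M) := by
      rw [abs_sub_comm]
      exact (abs_Feps_sub_le β hε0 hεM (hM y)).trans (by gcongr)
    calc _ ≤ Kθ * |x| ^ 2 * T + |x - Feps β ε x y| * T := norm_sub_Gfun_sub_smul_le θ hKθ hT _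
      _ ≤ Kθ * (A * ε) ^ 2 * T + A * ε * (4 * ε * M) * T := by gcongr
      _ = (Kθ * A ^ 2 * T + 4 * A * M * T) * ε ^ 2 := by ring
      _ ≤ _ := mul_le_mul_of_nonneg_right (by linarith) (by positivity)
  · calc _ ≤ 4 * |x| * ε * (Kβ * (|x| * T) + ε * M ^ 2) :=
          abs_sub_Feps_mul_le β θ hKβ hT hε0 hεM hM hx0.le
      _ ≤ 4 * (A * ε) * ε * (Kβ * (A * ε * T) + ε * M ^ 2) := by gcongr
      _ = 4 * A * (Kβ * A * T + M ^ 2) * ε ^ 3 := by ring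
      _ ≤ _ := mul_le_mul_of_nonneg_right (by linarith) (by positivity)

theorem stmt_6 (n : ℕ) (hn : 1 ≤ n)
    (β : EuclideanSpace ℝ (Fin n) → ℝ)
    (hβ : ContDiff ℝ 1 β)
    (hβbd : BddAbove (Set.range fun y => |β y|))
    (hβ'bd : BddAbove (Set.range fun y => ‖fderiv ℝ β y‖))
    (θ : EuclideanSpace ℝ (Fin n) → EuclideanSpace ℝ (Fin n))
    (hθ : ContDiff ℝ 1 θ)
    (hθbd : BddAbove (Set.range fun y => ‖θ y‖))
    (hθ'bd : BddAbove (Set.range fun y => ‖fderiv ℝ θ y‖)) :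
    ∀ A > 0, ∃ C > 0, ∃ ε₀ > 0, ∀ ε : ℝ, 0 < ε → ε ≤ ε₀ →
      ∀ x : ℝ, x ∈ Set.Icc (-(A * ε)) (A * ε) → ∀ y : EuclideanSpace ℝ (Fin n),
        (x ≤ 0 → Feps β ε x y = x) ∧
        ‖y - Gfun θ x y - Feps β ε x y • θ (Gfun θ x y)‖ ≤ C * ε ^ 2 ∧
        (0 < x →
          |x - Feps β ε x y * (1 + 2 * ε * β (Gfun θ x y))| ≤ C * ε ^ 3) :=
  stmt_6_general n β hβ hβbd hβ'bd θ hθ hθbd hθ'bd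
end

section
/- If moreover g_ε(x) = x for |x| ≤ Aε, g_ε(x) = 0 for |x| ≥ 2Aε, and ε‖β‖∞ < 1/8, then the map H_ε(x,y) = (x + g_ε(x)(B^ε(y) − 1), y − g_ε(x)θ(y)) satisfies: the first coordinate of H_ε(x,y) is ≥ 0 whenever x ≥ 0, and is < 0 whenever x < 0; that is, H_ε maps [0,∞) × ℝⁿ into [0,∞) × ℝⁿ and (−∞,0) × ℝⁿ into (−∞,0) × ℝⁿ. -/
/- STATEMENT 11: If g_ε(x) = x for |x| ≤ Aε, g_ε(x) = 0 for |x| ≥ 2Aε, and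
ε‖β‖∞ < 1/8, then H_ε(x,y) = (x + g_ε(x)(B^ε(y) − 1), y − g_ε(x)θ(y)) has first
coordinate ≥ 0 whenever x ≥ 0 and < 0 whenever x < 0; i.e. H_ε maps [0,∞) × ℝⁿ into
[0,∞) × ℝⁿ and (−∞,0) × ℝⁿ into (−∞,0) × ℝⁿ. -/
theorem stmt_11 (n : ℕ) (hn : 1 ≤ n) (A : ℝ) (hA : 0 < A)
    (β : EuclideanSpace ℝ (Fin n) → ℝ)
    (hβ : ContDiff ℝ 1 β)
    (hβbd : BddAbove (Set.range fun y => |β y|))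
    (hβ'bd : BddAbove (Set.range fun y => ‖fderiv ℝ β y‖))
    (θ : EuclideanSpace ℝ (Fin n) → EuclideanSpace ℝ (Fin n))
    (hθ : ContDiff ℝ 1 θ)
    (hθbd : BddAbove (Set.range fun y => ‖θ y‖))
    (hθ'bd : BddAbove (Set.range fun y => ‖fderiv ℝ θ y‖))
    (ε : ℝ) (hε : 0 < ε) (hεβ : ε * (⨆ y, |β y|) < 1 / 8)
    (g : ℝ → ℝ) (hg : ContDiff ℝ 1 g)
    (hgbd : ∀ x, |g x| ≤ 2 * A * ε) (hg'bd : ∀ x, |deriv g x| ≤ 2 * A)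
    (hgid : ∀ x : ℝ, |x| ≤ A * ε → g x = x)
    (hgzero : ∀ x : ℝ, 2 * A * ε ≤ |x| → g x = 0) :
    ∀ (x : ℝ) (y : EuclideanSpace ℝ (Fin n)),
      (0 ≤ x →
        0 ≤ (x + g x * ((1 - ε * β y) / (1 + ε * β y) - 1),
              y - g x • θ y).1) ∧
      (x < 0 →
        (x + g x * ((1 - ε * β y) / (1 + ε * β y) - 1),
          y - g x • θ y).1 < 0) := by
  intro x y
  have hMy : |β y| ≤ ⨆ y, |β y| := le_ciSup hβbd y
  have ht : ε * |β y| < 1/8 :=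
    lt_of_le_of_lt (by nlinarith) hεβ
  set t := ε * β y with htdef
  have htabs : |t| < 1/8 := by
    rw [htdef, abs_mul, abs_of_pos hε]; exact ht
  obtain ⟨hl, hr⟩ := abs_lt.mp htabs
  have ht1 : (0:ℝ) < 1 + t := by linarith
  have ht2 : (0:ℝ) < 1 - t := by linarith
  have hD0 : 0 < (1 - t)/(1 + t) := div_pos ht2 ht1
  have hDdiff : |(1 - t)/(1 + t) - 1| < 1/2 := by
    have h : (1 - t)/(1 + t) - 1 = (-2)*t/(1+t) := by field_simp; ring
    rw [h, abs_div, abs_of_pos ht1, div_lt_iff₀ ht1, abs_mul]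
    rw [abs_neg, abs_two]
    nlinarith [abs_nonneg t]
  have hkey : |g x * ((1 - t)/(1 + t) - 1)| ≤ A * ε := by
    rw [abs_mul]
    calc |g x| * |(1 - t)/(1 + t) - 1| ≤ (2*A*ε) * (1/2) :=
          mul_le_mul (hgbd x) hDdiff.le (abs_nonneg _) (by positivity)
      _ = A * ε := by ring
  obtain ⟨hk1, hk2⟩ := abs_le.mp hkey
  constructor
  · intro hx
    simp only
    by_cases hxa : x ≤ A * ε
    · have hgx : g x = x := hgid x (by rw [abs_of_nonneg hx]; exact hxa)
      have h : x + g x * ((1-t)/(1+t) - 1) = x * ((1-t)/(1+t)) := by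
        rw [hgx]; ring
      rw [h]
      exact mul_nonneg hx hD0.le
    · push_neg at hxa
      linarith
  · intro hx
    simp only
    by_cases hxa : -(A * ε) ≤ x
    · have hgx : g x = x := hgid x (by rw [abs_of_neg hx]; linarith)
      have h : x + g x * ((1-t)/(1+t) - 1) = x * ((1-t)/(1+t)) := by
        rw [hgx]; ring
      rw [h]
      exact mul_neg_of_neg_of_pos hx hD0
    · push_neg at hxa
      linarith
end

section
/- As ε → 0⁺, q(ε) = 1/2 + (1/2)·(−bd/Σ − β₀ + d′/(2d))·ε + O(ε²); that is, there exist ε₁ ∈ (0, ε₀] and C₁ > 0 such that |q(ε) − 1/2 − (1/2)(−bd/Σ − β₀ + d′/(2d))ε| ≤ C₁ε² for all ε ∈ (0, ε₁]. -/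
/-!
Write u = ã₊|b|/Σ, v = (ã₊ + a₋)|b|/Σ and w = -b a₋/Σ, so that q = e^w sinh u / sinh v with
u, v, w = O(ε) and v ≥ const·ε. Then q - 1/2 - cε = (e^w sinh u - (1/2 + cε) sinh v) / sinh v.
Since e^w sinh u = (1 + w) u + O(ε³) and sinh v = v + O(ε³), the numerator is
(1 + w) u - (1/2 + cε) v + O(ε³); inserting the second-order expansions of ã₊ and a₋, the
coefficients of ε and ε² of this expression vanish for the given value of c. Hence the numerator
is O(ε³) while the denominator is at least const·ε.
-/

open Filter Asymptotics Topology Real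

theorem Real.abs_sinh_sub_self_le {x : ℝ} (hx : |x| ≤ 1) : |sinh x - x| ≤ |x| ^ 3 := by
  have hexp : ∀ y : ℝ, |y| ≤ 1 → |exp y - (1 + y + y ^ 2 / 2)| ≤ |y| ^ 3 * (2 / 9) := by
    intro y hy
    have h := Real.exp_bound hy (n := 3) (by norm_num)
    norm_num [Finset.sum_range_succ, Nat.factorial] at h
    convert h using 3
  have h₁ := hexp x hx
  have h₂ := hexp (-x) (by rwa [abs_neg])
  rw [abs_neg] at h₂
  calc |sinh x - x|
      = |(exp x - (1 + x + x ^ 2 / 2)) - (exp (-x) - (1 + -x + (-x) ^ 2 / 2))| / 2 := by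
        rw [sinh_eq, ← abs_two, ← abs_div, abs_two]; ring_nf
    _ ≤ (|x| ^ 3 * (2 / 9) + |x| ^ 3 * (2 / 9)) / 2 := by
        gcongr; exact (abs_sub _ _).trans (add_le_add h₁ h₂)
    _ ≤ |x| ^ 3 := by nlinarith [pow_nonneg (abs_nonneg x) 3]

section Asymptotics

variable {α : Type*} {l : Filter α} {f g h u w N D : α → ℝ} {c : ℝ}

theorem Asymptotics.IsBigO.mul_tendsto (hf : f =O[l] g) (hh : Tendsto h l (𝓝 c)) :
    (fun x => f x * h x) =O[l] g := by
  simpa using hf.mul (hh.isBigO_one ℝ)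

theorem eventually_abs_le_one (hu : Tendsto u l (𝓝 0)) : ∀ᶠ x in l, |u x| ≤ 1 :=
  (tendsto_zero_iff_norm_tendsto_zero.1 hu).eventually (ge_mem_nhds one_pos)

theorem isBigO_exp_sub_one_sub_self (hu : Tendsto u l (𝓝 0)) :
    (fun x => exp (u x) - 1 - u x) =O[l] fun x => u x ^ 2 :=
  .of_bound 1 <| (eventually_abs_le_one hu).mono fun x hx => by
    simpa [abs_of_nonneg (sq_nonneg (u x))] using Real.abs_exp_sub_one_sub_id_le hx

theorem isBigO_sinh_sub_self (hu : Tendsto u l (𝓝 0)) :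
    (fun x => sinh (u x) - u x) =O[l] fun x => u x ^ 3 :=
  .of_bound 1 <| (eventually_abs_le_one hu).mono fun x hx => by
    simpa [abs_pow] using abs_sinh_sub_self_le hx

theorem isBigO_exp_mul_sinh_sub (hg : Tendsto g l (𝓝 0)) (hu : u =O[l] g) (hw : w =O[l] g) :
    (fun x => exp (w x) * sinh (u x) - (1 + w x) * u x) =O[l] fun x => g x ^ 3 := by
  have hu₀ := hu.trans_tendsto hg
  have hw₀ := hw.trans_tendsto hg
  have hsinh : (fun x => sinh (u x) - u x) =O[l] fun x => g x ^ 3 :=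
    (isBigO_sinh_sub_self hu₀).trans (by simpa using hu.pow 3)
  have hg3 : (fun x => g x ^ 3) =O[l] g := by
    simpa [← pow_succ'] using (isBigO_refl g l).mul_tendsto (hg.pow 2)
  have hexp : (fun x => exp (w x) - 1 - w x) =O[l] fun x => g x ^ 2 :=
    (isBigO_exp_sub_one_sub_self hw₀).trans (by simpa using hw.pow 2)
  have h1 : (fun x => (exp (w x) - 1 - w x) * sinh (u x)) =O[l] fun x => g x ^ 3 := by
    simpa [← pow_succ] using hexp.mul ((hsinh.trans hg3).add hu |>.congr_left fun x => by ring)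
  have h2 : (fun x => (1 + w x) * (sinh (u x) - u x)) =O[l] fun x => g x ^ 3 := by
    simpa [mul_comm] using hsinh.mul_tendsto (tendsto_const_nhds.add hw₀)
  exact (h1.add h2).congr_left fun x => by ring

theorem Asymptotics.IsBigO.div_of_isBigO_cube (hN : N =O[l] fun x => g x ^ 3) (hD : g =O[l] D)
    (h₀ : ∀ᶠ x in l, g x = 0 → D x = 0) : (fun x => N x / D x) =O[l] fun x => g x ^ 2 := by
  refine (hN.mul (hD.inv_rev h₀)).congr (fun x => (div_eq_mul_inv _ _).symm) fun x => ?_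
  rcases eq_or_ne (g x) 0 with hx | hx
  · simp [hx]
  · field_simp

end Asymptotics

def HasQuadraticExpansion (l : Filter ℝ) (f : ℝ → ℝ) (a α : ℝ) : Prop :=
  (fun ε => f ε - (a * ε + α * ε ^ 2)) =O[l] fun ε => ε ^ 3

theorem isBigO_nhdsGT_of_abs_le {f : ℝ → ℝ} {C ε₀ : ℝ} {n : ℕ} (hε₀ : 0 < ε₀)
    (h : ∀ ε, 0 < ε → ε ≤ ε₀ → |f ε| ≤ C * ε ^ n) : f =O[𝓝[>] 0] fun ε => ε ^ n :=
  .of_bound C <| mem_of_superset (Ioc_mem_nhdsGT hε₀) fun ε ⟨h0, h1⟩ => by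
    simpa [abs_of_pos h0] using h ε h0 h1

theorem exists_forall_Ioc_of_eventually_nhdsGT {P : ℝ → Prop} {ε₀ : ℝ} (hε₀ : 0 < ε₀)
    (h : ∀ᶠ ε in 𝓝[>] 0, P ε) : ∃ ε₁, 0 < ε₁ ∧ ε₁ ≤ ε₀ ∧ ∀ ε, 0 < ε → ε ≤ ε₁ → P ε := by
  obtain ⟨δ, hδ, hP⟩ := (mem_nhdsGT_iff_exists_Ioc_subset).1 h
  exact ⟨min δ ε₀, lt_min hδ hε₀, min_le_right _ _,
    fun ε h0 h1 => hP ⟨h0, h1.trans (min_le_left _ _)⟩⟩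

namespace HasQuadraticExpansion

variable {l : Filter ℝ} {f g : ℝ → ℝ} {a α a' α' : ℝ}

theorem add (hf : HasQuadraticExpansion l f a α) (hg : HasQuadraticExpansion l g a' α') :
    HasQuadraticExpansion l (fun ε => f ε + g ε) (a + a') (α + α') :=
  (IsBigO.add hf hg).congr_left fun ε => by ring

theorem mul_one_sub (hl : l ≤ 𝓝 0) (hf : HasQuadraticExpansion l f a α) (β : ℝ) :
    HasQuadraticExpansion l (fun ε => f ε * (1 - β * ε)) a (α - a * β) := by
  have hε : Tendsto (fun ε : ℝ => ε) l (𝓝 0) := tendsto_id.mono_left hl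
  have h₁ := IsBigO.mul_tendsto hf ((tendsto_const_nhds (x := (1 : ℝ))).sub (hε.const_mul β))
  have h₂ : (fun ε : ℝ => -(α * β) * ε ^ 3) =O[l] fun ε => ε ^ 3 :=
    (isBigO_refl _ l).const_mul_left _
  exact (h₁.add h₂).congr_left fun ε => by ring

theorem isBigO (hl : l ≤ 𝓝 0) (hf : HasQuadraticExpansion l f a α) : f =O[l] fun ε => ε := by
  have h₃ : (fun ε : ℝ => ε ^ 3) =O[l] fun ε => ε :=
    ((isLittleO_pow_id (by norm_num)).mono hl).isBigO
  have h₂ : (fun ε : ℝ => ε ^ 2) =O[l] fun ε => ε :=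
    ((isLittleO_pow_id (by norm_num)).mono hl).isBigO
  have h₁ := (isBigO_refl (fun ε : ℝ => ε) l).const_mul_left a
  exact ((hf.trans h₃).add (h₁.add (h₂.const_mul_left α))).congr_left fun ε => by ring

theorem eventually_le (hf : HasQuadraticExpansion (𝓝[>] 0) f a α) (ha : 0 < a) :
    ∀ᶠ ε in 𝓝[>] 0, a * ε / 2 ≤ f ε := by
  have hl : 𝓝[>] (0 : ℝ) ≤ 𝓝 0 := nhdsWithin_le_nhds
  have h₃ : (fun ε : ℝ => ε ^ 3) =o[𝓝[>] 0] fun ε => ε := (isLittleO_pow_id (by norm_num)).mono hl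
  have h₂ : (fun ε : ℝ => ε ^ 2) =o[𝓝[>] 0] fun ε => ε := (isLittleO_pow_id (by norm_num)).mono hl
  have hlin : (fun ε => f ε - a * ε) =o[𝓝[>] 0] fun ε => ε :=
    ((hf.trans_isLittleO h₃).add (h₂.const_mul_left α)).congr_left fun ε => by ring
  filter_upwards [hlin.bound (half_pos ha), self_mem_nhdsWithin] with ε hε (hε₀ : 0 < ε)
  rw [Real.norm_eq_abs, Real.norm_eq_abs, abs_of_pos hε₀] at hε
  linarith [neg_abs_le (f ε - a * ε)]

end HasQuadraticExpansion

section Expansion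

variable {l : Filter ℝ} {A B : ℝ → ℝ} {a α δ b Sig c s : ℝ}

/-- The numerator of `q - 1/2 - c ε`, with `exp w` replaced by `1 + w` and `sinh` by the identity,
divided by `|b| / Σ`; `hc` says that its `ε²` coefficient vanishes. -/
theorem isBigO_linearized_numerator (hl : l ≤ 𝓝 0) (hA : HasQuadraticExpansion l A a α)
    (hB : HasQuadraticExpansion l B a δ) (hc : 4 * a * c = α - δ - 2 * s * a ^ 2) :
    (fun ε => (1 - s * B ε) * A ε - (1 / 2 + c * ε) * (A ε + B ε)) =O[l] fun ε => ε ^ 3 := by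
  have hε : Tendsto (fun ε : ℝ => ε) l (𝓝 0) := tendsto_id.mono_left hl
  have hB₀ : Tendsto B l (𝓝 0) := (hB.isBigO hl).trans_tendsto hε
  have hcont {P : ℝ → ℝ} (hP : Continuous P) : Tendsto P l (𝓝 (P 0)) := (hP.tendsto 0).mono_left hl
  have h₀ := (isBigO_refl (fun ε : ℝ => ε ^ 3) l).mul_tendsto
    (hcont (by fun_prop : Continuous fun ε : ℝ => -(s * a + c) * (α + δ) - s * α * δ * ε))
  have h₁ := IsBigO.mul_tendsto hA
    (((tendsto_const_nhds (x := (1 / 2 : ℝ))).sub (hB₀.const_mul s)).sub (hε.const_mul c))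
  have h₂ := IsBigO.mul_tendsto hB
    (hcont (by fun_prop : Continuous fun ε : ℝ => s * (a * ε + α * ε ^ 2) + 1 / 2 + c * ε))
  refine ((h₀.add h₁).sub h₂).congr_left fun ε => ?_
  linear_combination (ε ^ 2 / 2) * hc

theorem isBigO_numerator (hl : l ≤ 𝓝 0) (hA : HasQuadraticExpansion l A a α)
    (hB : HasQuadraticExpansion l B a δ) (hc : 4 * a * c = α - δ - 2 * (b / Sig) * a ^ 2) :
    (fun ε => exp (-(b * B ε) / Sig) * sinh (A ε * |b| / Sig)
      - (1 / 2 + c * ε) * sinh ((A ε + B ε) * |b| / Sig)) =O[l] fun ε => ε ^ 3 := by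
  have hε : Tendsto (fun ε : ℝ => ε) l (𝓝 0) := tendsto_id.mono_left hl
  have hu : (fun ε => A ε * |b| / Sig) =O[l] fun ε => ε :=
    ((hA.isBigO hl).const_mul_left (|b| / Sig)).congr_left fun ε => by ring
  have hv : (fun ε => (A ε + B ε) * |b| / Sig) =O[l] fun ε => ε :=
    (((hA.add hB).isBigO hl).const_mul_left (|b| / Sig)).congr_left fun ε => by ring
  have hw : (fun ε => -(b * B ε) / Sig) =O[l] fun ε => ε :=
    ((hB.isBigO hl).const_mul_left (-b / Sig)).congr_left fun ε => by ring
  have h₁ := isBigO_exp_mul_sinh_sub hε hu hw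
  have h₂ : (fun ε => (1 / 2 + c * ε) * (sinh ((A ε + B ε) * |b| / Sig) - (A ε + B ε) * |b| / Sig))
      =O[l] fun ε => ε ^ 3 := by
    have hsinh := (isBigO_sinh_sub_self (hv.trans_tendsto hε)).trans (by simpa using hv.pow 3)
    simpa [mul_comm] using
      hsinh.mul_tendsto ((tendsto_const_nhds (x := (1 / 2 : ℝ))).add (hε.const_mul c))
  have h₃ := (isBigO_linearized_numerator hl hA hB hc).const_mul_left (|b| / Sig)
  exact ((h₁.sub h₂).add h₃).congr_left fun ε => by ring

theorem isBigO_exp_mul_sinh_div_sinh (hA : HasQuadraticExpansion (𝓝[>] 0) A a α)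
    (hB : HasQuadraticExpansion (𝓝[>] 0) B a δ) (ha : 0 < a) (hb : b ≠ 0) (hSig : 0 < Sig)
    (hc : 4 * a * c = α - δ - 2 * (b / Sig) * a ^ 2) :
    (fun ε => exp (-(b * B ε) / Sig) * sinh (A ε * |b| / Sig) / sinh ((A ε + B ε) * |b| / Sig)
      - 1 / 2 - c * ε) =O[𝓝[>] 0] fun ε => ε ^ 2 := by
  have hκa : 0 < |b| / Sig * a := mul_pos (div_pos (abs_pos.2 hb) hSig) ha
  have hpos : ∀ᶠ ε in 𝓝[>] (0 : ℝ), 0 < ε := self_mem_nhdsWithin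
  have hlow : ∀ᶠ ε in 𝓝[>] 0, |b| / Sig * a * ε ≤ sinh ((A ε + B ε) * |b| / Sig) := by
    filter_upwards [(hA.add hB).eventually_le (by linarith), hpos] with ε hε hε₀
    have hv : |b| / Sig * a * ε ≤ (A ε + B ε) * |b| / Sig := by
      calc |b| / Sig * a * ε = |b| / Sig * (a * ε) := by ring
        _ ≤ |b| / Sig * (A ε + B ε) := by gcongr; linarith
        _ = (A ε + B ε) * |b| / Sig := by ring
    exact hv.trans (self_le_sinh_iff.2 ((by positivity : (0:ℝ) ≤ _).trans hv))
  have hden : (fun ε : ℝ => ε) =O[𝓝[>] 0] fun ε => sinh ((A ε + B ε) * |b| / Sig) := by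
    refine .of_bound (|b| / Sig * a)⁻¹ ?_
    filter_upwards [hlow, hpos] with ε hε hε₀
    have hD : 0 < sinh ((A ε + B ε) * |b| / Sig) := (mul_pos hκa hε₀).trans_le hε
    rw [Real.norm_eq_abs, Real.norm_eq_abs, abs_of_pos hε₀, abs_of_pos hD, inv_mul_eq_div,
      le_div_iff₀ hκa]
    linarith
  refine ((isBigO_numerator nhdsWithin_le_nhds hA hB hc).div_of_isBigO_cube hden
    (hpos.mono fun ε hε h => absurd h hε.ne')).congr' ?_ EventuallyEq.rfl
  filter_upwards [hlow, hpos] with ε hε hε₀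
  have : sinh ((A ε + B ε) * |b| / Sig) ≠ 0 := (lt_of_lt_of_le (by positivity) hε).ne'
  generalize sinh ((A ε + B ε) * |b| / Sig) = D at this ⊢
  field_simp
  ring

end Expansion

theorem stmt_14_general (d d' b Sig β₀ C ε₀ : ℝ)
    (hd : 0 < d) (hb : b ≠ 0) (hSig : 0 < Sig) (hε₀ : 0 < ε₀)
    (ap am : ℝ → ℝ)
    (hap : ∀ ε : ℝ, 0 < ε → ε ≤ ε₀ → |ap ε - d * ε - d' * ε ^ 2 / 2| ≤ C * ε ^ 3)
    (ham : ∀ ε : ℝ, 0 < ε → ε ≤ ε₀ → |am ε - d * ε + d' * ε ^ 2 / 2| ≤ C * ε ^ 3) :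
    ∃ ε₁ C₁ : ℝ, 0 < ε₁ ∧ ε₁ ≤ ε₀ ∧ 0 < C₁ ∧
      ∀ ε : ℝ, 0 < ε → ε ≤ ε₁ →
        0 < ap ε * (1 - 2 * ε * β₀) ∧
        0 < ap ε * (1 - 2 * ε * β₀) + am ε ∧
        |Real.exp (-(b * am ε) / Sig) *
              Real.sinh (ap ε * (1 - 2 * ε * β₀) * |b| / Sig) /
              Real.sinh ((ap ε * (1 - 2 * ε * β₀) + am ε) * |b| / Sig)
            - 1 / 2 - 1 / 2 * (-(b * d) / Sig - β₀ + d' / (2 * d)) * ε|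
          ≤ C₁ * ε ^ 2 := by
  have hA : HasQuadraticExpansion (𝓝[>] 0) (fun ε => ap ε * (1 - 2 * ε * β₀)) d
      (d' / 2 - d * (2 * β₀)) := by
    have hap' : HasQuadraticExpansion (𝓝[>] 0) ap d (d' / 2) :=
      (isBigO_nhdsGT_of_abs_le hε₀ hap).congr_left fun ε => by ring
    simpa only [mul_comm _ β₀, mul_assoc] using hap'.mul_one_sub nhdsWithin_le_nhds (2 * β₀)
  have hB : HasQuadraticExpansion (𝓝[>] 0) am d (-(d' / 2)) :=
    (isBigO_nhdsGT_of_abs_le hε₀ ham).congr_left fun ε => by ring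
  obtain ⟨C₁, hC₁, hq⟩ := (isBigO_exp_mul_sinh_div_sinh hA hB hd hb hSig
    (c := 1 / 2 * (-(b * d) / Sig - β₀ + d' / (2 * d))) (by field_simp; ring)).exists_pos
  obtain ⟨ε₁, hε₁, hε₁₀, h⟩ := exists_forall_Ioc_of_eventually_nhdsGT hε₀
    ((hA.eventually_le hd).and (((hA.add hB).eventually_le (by linarith)).and hq.bound))
  refine ⟨ε₁, C₁, hε₁, hε₁₀, hC₁, fun ε hε hεε₁ => ?_⟩
  obtain ⟨hAε, hABε, hqε⟩ := h ε hε hεε₁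
  refine ⟨(by positivity : 0 < d * ε / 2).trans_le hAε,
    (by positivity : 0 < (d + d) * ε / 2).trans_le hABε, ?_⟩
  simpa [abs_of_pos hε] using hqε

theorem stmt_14 (d d' b Sig β₀ C ε₀ : ℝ)
    (hd : 0 < d) (hb : b ≠ 0) (hSig : 0 < Sig) (hC : 0 < C) (hε₀ : 0 < ε₀)
    (ap am : ℝ → ℝ)
    (hap : ∀ ε : ℝ, 0 < ε → ε ≤ ε₀ → |ap ε - d * ε - d' * ε ^ 2 / 2| ≤ C * ε ^ 3)
    (ham : ∀ ε : ℝ, 0 < ε → ε ≤ ε₀ → |am ε - d * ε + d' * ε ^ 2 / 2| ≤ C * ε ^ 3) :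
    ∃ ε₁ C₁ : ℝ, 0 < ε₁ ∧ ε₁ ≤ ε₀ ∧ 0 < C₁ ∧
      ∀ ε : ℝ, 0 < ε → ε ≤ ε₁ →
        0 < ap ε * (1 - 2 * ε * β₀) ∧
        0 < ap ε * (1 - 2 * ε * β₀) + am ε ∧
        |Real.exp (-(b * am ε) / Sig) *
              Real.sinh (ap ε * (1 - 2 * ε * β₀) * |b| / Sig) /
              Real.sinh ((ap ε * (1 - 2 * ε * β₀) + am ε) * |b| / Sig)
            - 1 / 2 - 1 / 2 * (-(b * d) / Sig - β₀ + d' / (2 * d)) * ε|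
          ≤ C₁ * ε ^ 2 :=
  stmt_14_general d d' b Sig β₀ C ε₀ hd hb hSig hε₀ ap am hap ham
end

section
/- As ε → 0⁺, ã₊(ε) − (ã₊(ε) + a₋(ε))·q(ε) = (b d²/Σ)·ε² + O(ε³), and consequently (1/b)·(ã₊(ε) − (ã₊(ε) + a₋(ε))·q(ε)) = (d²/Σ)·ε² + O(ε³). -/
/-!
Put `c = b / Σ`, `u = ã₊(ε)`, `v = a₋(ε)`. Since `sinh` is odd the `|b|` may be replaced by `b`, and
`sinh t = e⁻ᵗ (e²ᵗ - 1) / 2` turns `q` into `(e^{2cu} - 1) / (e^{2c(u+v)} - 1)`. Expanding both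
exponentials to second order gives `u - (u + v) q = c u v + O((u + v)³)`, and `u, v = d ε + O(ε²)`
gives `c u v = c d² ε² + O(ε³)`.
-/

open Real Filter Topology Asymptotics

lemma abs_exp_sub_quadratic_le {x : ℝ} (hx : |x| ≤ 1) :
    |exp x - (1 + x + x ^ 2 / 2)| ≤ |x| ^ 3 := by
  have h := Real.exp_bound hx (n := 3) (by norm_num)
  norm_num [Finset.sum_range_succ, Nat.factorial] at h
  calc |exp x - (1 + x + x ^ 2 / 2)| ≤ |x| ^ 3 * (2 / 9) := by convert h using 3
    _ ≤ |x| ^ 3 := by nlinarith [pow_nonneg (abs_nonneg x) 3]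

lemma half_abs_le_abs_exp_sub_one {y : ℝ} (hy : |y| ≤ 1 / 2) : |y| / 2 ≤ |exp y - 1| := by
  have h := Real.abs_exp_sub_one_sub_id_le (hy.trans (by norm_num))
  have h' := abs_sub_abs_le_abs_sub y (exp y - 1)
  rw [abs_sub_comm y] at h'
  nlinarith [sq_abs y, abs_nonneg y]

lemma abs_sub_mul_expm1_div_expm1_le {x y : ℝ} (hxy : |x| ≤ |y|) (hy : |y| ≤ 1 / 2) :
    |x - y * ((exp x - 1) / (exp y - 1)) - x * (y - x) / 2| ≤ 6 * |y| ^ 3 := by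
  rcases eq_or_ne y 0 with rfl | hy0
  · obtain rfl : x = 0 := abs_nonpos_iff.mp (by simpa using hxy)
    simp
  have hy1 : |y| ≤ 1 := hy.trans (by norm_num)
  have hD := half_abs_le_abs_exp_sub_one hy
  have hD0 : 0 < |exp y - 1| := lt_of_lt_of_le (by positivity) hD
  have hnum : |x * (exp y - (1 + y + y ^ 2 / 2)) - y * (exp x - (1 + x + x ^ 2 / 2))
      - x * (y - x) / 2 * (exp y - 1 - y)| ≤ 3 * |y| ^ 4 := by
    have hEx := abs_exp_sub_quadratic_le (hxy.trans hy1)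
    have hEy := abs_exp_sub_quadratic_le hy1
    have hLy := Real.abs_exp_sub_one_sub_id_le hy1
    have hx3 : |x| ^ 3 ≤ |y| ^ 3 := pow_le_pow_left₀ (abs_nonneg x) hxy 3
    have hxy2 : |x * (y - x) / 2| ≤ |y| ^ 2 := by
      rw [abs_div, abs_mul, abs_two]
      nlinarith [abs_sub x y, abs_nonneg x, abs_nonneg (x - y), abs_sub_comm x y]
    calc _ ≤ |x| * |exp y - (1 + y + y ^ 2 / 2)| + |y| * |exp x - (1 + x + x ^ 2 / 2)|
          + |x * (y - x) / 2| * |exp y - 1 - y| := by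
          simp only [← abs_mul]; exact (abs_sub _ _).trans (add_le_add_left (abs_sub _ _) _)
      _ ≤ |y| * |y| ^ 3 + |y| * |y| ^ 3 + |y| ^ 2 * |y| ^ 2 := by
          rw [← sq_abs y] at hLy
          gcongr
          linarith
      _ = 3 * |y| ^ 4 := by ring
  have hkey : x - y * ((exp x - 1) / (exp y - 1)) - x * (y - x) / 2
      = (x * (exp y - (1 + y + y ^ 2 / 2)) - y * (exp x - (1 + x + x ^ 2 / 2))
      - x * (y - x) / 2 * (exp y - 1 - y)) / (exp y - 1) := by
    field_simp [abs_pos.mp hD0]; ring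
  rw [hkey, abs_div, div_le_iff₀ hD0]
  calc _ ≤ 3 * |y| ^ 4 := hnum
    _ ≤ 6 * |y| ^ 3 * |exp y - 1| := by nlinarith [pow_nonneg (abs_nonneg y) 3]

lemma abs_sub_mul_expm1_ratio_sub_le {c u v : ℝ} (hc : c ≠ 0) (hu : 0 ≤ u) (hv : 0 ≤ v)
    (hcuv : |c| * (u + v) ≤ 1 / 4) :
    |u - (u + v) * ((exp (2 * c * u) - 1) / (exp (2 * c * (u + v)) - 1)) - c * u * v|
      ≤ 24 * c ^ 2 * (u + v) ^ 3 := by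
  have hc' : 0 < |c| := abs_pos.mpr hc
  have hx : |2 * c * u| = 2 * |c| * u := by rw [abs_mul, abs_mul, abs_two, abs_of_nonneg hu]
  have hy : |2 * c * (u + v)| = 2 * |c| * (u + v) := by
    rw [abs_mul, abs_mul, abs_two, abs_of_nonneg (add_nonneg hu hv)]
  have h := abs_sub_mul_expm1_div_expm1_le (x := 2 * c * u) (y := 2 * c * (u + v))
    (by rw [hx, hy]; nlinarith) (by rw [hy]; linarith)
  have hscale : 2 * c * u - 2 * c * (u + v) * ((exp (2 * c * u) - 1) / (exp (2 * c * (u + v)) - 1))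
      - 2 * c * u * (2 * c * (u + v) - 2 * c * u) / 2
      = 2 * c * (u - (u + v) * ((exp (2 * c * u) - 1) / (exp (2 * c * (u + v)) - 1))
        - c * u * v) := by ring
  rw [hscale, abs_mul, abs_mul, abs_two, hy] at h
  rw [← mul_le_mul_iff_right₀ (by positivity : 0 < 2 * |c|)]
  calc _ ≤ 6 * (2 * |c| * (u + v)) ^ 3 := h
    _ = 2 * |c| * (24 * c ^ 2 * (u + v) ^ 3) := by rw [← sq_abs c]; ring

lemma sinh_eq_exp_neg_mul (x : ℝ) : sinh x = exp (-x) * (exp (2 * x) - 1) / 2 := by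
  rw [sinh_eq, mul_sub, ← exp_add, mul_one]; ring_nf

lemma exp_neg_mul_sinh_div_sinh (c u v : ℝ) :
    exp (-(c * v)) * sinh (c * u) / sinh (c * (u + v))
      = (exp (2 * c * u) - 1) / (exp (2 * c * (u + v)) - 1) := by
  have hsplit : exp (-(c * v)) * exp (-(c * u)) = exp (-(c * (u + v))) := by
    rw [← exp_add]; ring_nf
  rw [sinh_eq_exp_neg_mul, sinh_eq_exp_neg_mul]
  calc _ = exp (-(c * v)) * exp (-(c * u)) / 2 * (exp (2 * c * u) - 1)
        / (exp (-(c * (u + v))) / 2 * (exp (2 * c * (u + v)) - 1)) := by ring_nf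
    _ = _ := by rw [hsplit, mul_div_mul_left _ _ (by positivity)]

lemma sinh_abs_mul_div_sinh_abs_mul (c x y : ℝ) :
    sinh (|c| * x) / sinh (|c| * y) = sinh (c * x) / sinh (c * y) := by
  rcases abs_choice c with h | h <;> rw [h]
  simp only [neg_mul, sinh_neg, neg_div_neg_eq]

lemma exp_mul_sinh_div_sinh_eq_expm1_ratio (b Sig u v : ℝ) (hSig : 0 ≤ Sig) :
    exp (-(b * v) / Sig) * sinh (u * |b| / Sig) / sinh ((u + v) * |b| / Sig)
      = (exp (2 * (b / Sig) * u) - 1) / (exp (2 * (b / Sig) * (u + v)) - 1) := by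
  have habs (x : ℝ) : x * |b| / Sig = |b / Sig| * x := by
    rw [abs_div, abs_of_nonneg hSig]; ring
  rw [habs, habs, mul_div_assoc, sinh_abs_mul_div_sinh_abs_mul, ← mul_div_assoc,
    ← exp_neg_mul_sinh_div_sinh]
  ring_nf

lemma isBigO_nhdsGT_zero_of_abs_le {f : ℝ → ℝ} {C ε₀ : ℝ} {n : ℕ} (hε₀ : 0 < ε₀)
    (h : ∀ ε, 0 < ε → ε ≤ ε₀ → |f ε| ≤ C * ε ^ n) : f =O[𝓝[>] 0] (· ^ n) := by
  refine IsBigO.of_bound C ?_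
  filter_upwards [Ioc_mem_nhdsGT hε₀] with ε ⟨hε, hεle⟩
  rw [Real.norm_eq_abs, Real.norm_eq_abs, abs_of_pos (pow_pos hε n)]
  exact h ε hε hεle

lemma exists_forall_Ioc_of_exists_eventually_nhdsGT_zero {P : ℝ → ℝ → Prop} {ε₀ : ℝ}
    (hε₀ : 0 < ε₀) (h : ∃ C > 0, ∀ᶠ ε in 𝓝[>] 0, P C ε) :
    ∃ ε₁ C, 0 < ε₁ ∧ ε₁ ≤ ε₀ ∧ 0 < C ∧ ∀ ε, 0 < ε → ε ≤ ε₁ → P C ε := by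
  obtain ⟨C, hC, hP⟩ := h
  obtain ⟨ε₁, hε₁, hsub⟩ := mem_nhdsGT_iff_exists_Ioc_subset.mp hP
  exact ⟨min ε₁ ε₀, C, lt_min hε₁ hε₀, min_le_right _ _, hC,
    fun ε hε hεle => hsub ⟨hε, hεle.trans (min_le_left _ _)⟩⟩

lemma pow_isBigO_pow_nhdsGT_zero {m n : ℕ} (h : m ≤ n) :
    (fun ε : ℝ => ε ^ n) =O[𝓝[>] 0] (· ^ m) := by
  rcases h.lt_or_eq with h | rfl
  · exact (isLittleO_pow_pow h).isBigO.mono nhdsWithin_le_nhds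
  · exact isBigO_refl _ _

section FirstOrderAsymptotics

variable {d : ℝ} {u v : ℝ → ℝ}

lemma isBigO_id_of_sub_isBigO_sq (hu : (fun ε => u ε - d * ε) =O[𝓝[>] 0] (· ^ 2)) :
    u =O[𝓝[>] 0] id := by
  have h := hu.trans <|
    (pow_isBigO_pow_nhdsGT_zero (m := 1) one_le_two).congr_right fun ε => pow_one ε
  exact (h.add ((isBigO_refl id _).const_mul_left d)).congr_left fun ε => by simp

lemma eventually_pos_of_sub_isBigO_sq (hd : 0 < d)
    (hu : (fun ε => u ε - d * ε) =O[𝓝[>] 0] (· ^ 2)) : ∀ᶠ ε in 𝓝[>] 0, 0 < u ε := by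
  have hsmall : (fun ε => u ε - d * ε) =o[𝓝[>] 0] id :=
    hu.trans_isLittleO <| ((isLittleO_pow_pow (m := 1) one_lt_two).mono
      nhdsWithin_le_nhds).congr_right fun ε => pow_one ε
  filter_upwards [hsmall.bound (half_pos hd), self_mem_nhdsWithin] with ε hε (hpos : 0 < ε)
  rw [Real.norm_eq_abs, Real.norm_eq_abs, id, abs_of_pos hpos] at hε
  nlinarith [neg_abs_le (u ε - d * ε)]

lemma mul_sub_sq_isBigO_cube (hu : (fun ε => u ε - d * ε) =O[𝓝[>] 0] (· ^ 2))
    (hv : (fun ε => v ε - d * ε) =O[𝓝[>] 0] (· ^ 2)) :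
    (fun ε => u ε * v ε - d ^ 2 * ε ^ 2) =O[𝓝[>] 0] (· ^ 3) := by
  have hlin : (fun ε : ℝ => d * ε) =O[𝓝[>] 0] id := (isBigO_refl id _).const_mul_left d
  have h1 := (hu.mul hv).trans (pow_isBigO_pow_nhdsGT_zero (m := 3) (n := 4) (by norm_num)
    |>.congr_left fun ε => by ring)
  have h2 := (hlin.mul hu).congr_right (g₂ := (· ^ 3)) fun ε => by rw [id]; ring
  have h3 := (hlin.mul hv).congr_right (g₂ := (· ^ 3)) fun ε => by rw [id]; ring
  exact ((h1.add h2).add h3).congr_left fun ε => by ring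

lemma sub_isBigO_sq_of_sub_isBigO_cube {a : ℝ}
    (h : (fun ε => u ε - d * ε - a * ε ^ 2) =O[𝓝[>] 0] (· ^ 3)) :
    (fun ε => u ε - d * ε) =O[𝓝[>] 0] (· ^ 2) :=
  ((h.trans (pow_isBigO_pow_nhdsGT_zero (by norm_num))).add
    ((isBigO_refl (· ^ 2) _).const_mul_left a)).congr_left fun ε => by ring

lemma mul_one_sub_sub_isBigO_sq (β : ℝ) (hu : (fun ε => u ε - d * ε) =O[𝓝[>] 0] (· ^ 2)) :
    (fun ε => u ε * (1 - 2 * ε * β) - d * ε) =O[𝓝[>] 0] (· ^ 2) := by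
  have h := ((isBigO_refl id _).mul (isBigO_id_of_sub_isBigO_sq hu)).const_mul_left (-2 * β)
  exact (hu.add (h.congr_right fun ε => (sq ε).symm)).congr_left fun ε => by rw [id]; ring

lemma sub_mul_expm1_ratio_sub_isBigO_cube {c : ℝ} (hc : c ≠ 0) (hd : 0 < d)
    (hu : (fun ε => u ε - d * ε) =O[𝓝[>] 0] (· ^ 2))
    (hv : (fun ε => v ε - d * ε) =O[𝓝[>] 0] (· ^ 2)) :
    (fun ε => u ε - (u ε + v ε) * ((exp (2 * c * u ε) - 1) / (exp (2 * c * (u ε + v ε)) - 1))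
      - c * d ^ 2 * ε ^ 2) =O[𝓝[>] 0] (· ^ 3) := by
  have hw : (fun ε => u ε + v ε) =O[𝓝[>] 0] id :=
    (isBigO_id_of_sub_isBigO_sq hu).add (isBigO_id_of_sub_isBigO_sq hv)
  have hsmall : ∀ᶠ ε in 𝓝[>] 0, |c| * (u ε + v ε) ≤ 1 / 4 := by
    have h := ((hw.trans_tendsto (tendsto_id.mono_left nhdsWithin_le_nhds)).const_mul |c|)
    rw [mul_zero] at h
    exact h.eventually_le_const (by norm_num)
  have hcore : (fun ε => u ε - (u ε + v ε) * ((exp (2 * c * u ε) - 1)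
      / (exp (2 * c * (u ε + v ε)) - 1)) - c * u ε * v ε) =O[𝓝[>] 0] (· ^ 3) := by
    refine (IsBigO.of_bound (24 * c ^ 2) ?_).trans (hw.pow 3)
    filter_upwards [eventually_pos_of_sub_isBigO_sq hd hu, eventually_pos_of_sub_isBigO_sq hd hv,
      hsmall] with ε hu0 hv0 hs
    rw [Real.norm_eq_abs, Real.norm_eq_abs, abs_of_pos (pow_pos (add_pos hu0 hv0) 3)]
    exact abs_sub_mul_expm1_ratio_sub_le hc hu0.le hv0.le hs
  exact (hcore.add ((mul_sub_sq_isBigO_cube hu hv).const_mul_left c)).congr_left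
    fun ε => by ring

end FirstOrderAsymptotics

theorem stmt_15_general (d d' b Sig β₀ C ε₀ : ℝ)
    (hd : 0 < d) (hb : b ≠ 0) (hSig : 0 < Sig) (hε₀ : 0 < ε₀)
    (ap am : ℝ → ℝ)
    (hap : ∀ ε : ℝ, 0 < ε → ε ≤ ε₀ → |ap ε - d * ε - d' * ε ^ 2 / 2| ≤ C * ε ^ 3)
    (ham : ∀ ε : ℝ, 0 < ε → ε ≤ ε₀ → |am ε - d * ε + d' * ε ^ 2 / 2| ≤ C * ε ^ 3) :
    ∃ ε₁ C₁ : ℝ, 0 < ε₁ ∧ ε₁ ≤ ε₀ ∧ 0 < C₁ ∧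
      ∀ ε : ℝ, 0 < ε → ε ≤ ε₁ →
        0 < ap ε * (1 - 2 * ε * β₀) ∧
        0 < ap ε * (1 - 2 * ε * β₀) + am ε ∧
        |ap ε * (1 - 2 * ε * β₀)
            - (ap ε * (1 - 2 * ε * β₀) + am ε) *
              (Real.exp (-(b * am ε) / Sig) *
                Real.sinh (ap ε * (1 - 2 * ε * β₀) * |b| / Sig) /
                Real.sinh ((ap ε * (1 - 2 * ε * β₀) + am ε) * |b| / Sig))
            - b * d ^ 2 / Sig * ε ^ 2| ≤ C₁ * ε ^ 3 ∧
        |1 / b *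
              (ap ε * (1 - 2 * ε * β₀)
                - (ap ε * (1 - 2 * ε * β₀) + am ε) *
                  (Real.exp (-(b * am ε) / Sig) *
                    Real.sinh (ap ε * (1 - 2 * ε * β₀) * |b| / Sig) /
                    Real.sinh ((ap ε * (1 - 2 * ε * β₀) + am ε) * |b| / Sig)))
            - d ^ 2 / Sig * ε ^ 2| ≤ C₁ * ε ^ 3 := by
  have hp := mul_one_sub_sub_isBigO_sq β₀ (sub_isBigO_sq_of_sub_isBigO_cube (a := d' / 2)
    ((isBigO_nhdsGT_zero_of_abs_le hε₀ hap).congr_left fun ε => by ring))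
  have hm := sub_isBigO_sq_of_sub_isBigO_cube (a := -d' / 2)
    ((isBigO_nhdsGT_zero_of_abs_le hε₀ ham).congr_left fun ε => by ring)
  obtain ⟨K, hK, hKO⟩ :=
    (sub_mul_expm1_ratio_sub_isBigO_cube (div_ne_zero hb hSig.ne') hd hp hm).exists_pos
  apply exists_forall_Ioc_of_exists_eventually_nhdsGT_zero hε₀
  refine ⟨K * (1 + |b|⁻¹), by positivity, ?_⟩
  filter_upwards [eventually_pos_of_sub_isBigO_sq hd hp, eventually_pos_of_sub_isBigO_sq hd hm,
    hKO.bound, self_mem_nhdsWithin] with ε hpos hmpos hbound (hε : 0 < ε)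
  rw [exp_mul_sinh_div_sinh_eq_expm1_ratio _ _ _ _ hSig.le]
  rw [Real.norm_eq_abs, Real.norm_eq_abs, abs_of_pos (pow_pos hε 3),
    show b / Sig * d ^ 2 * ε ^ 2 = b * d ^ 2 / Sig * ε ^ 2 by ring] at hbound
  generalize ap ε * (1 - 2 * ε * β₀) - _ = X at hbound ⊢
  have hscaled : 1 / b * X - d ^ 2 / Sig * ε ^ 2 = b⁻¹ * (X - b * d ^ 2 / Sig * ε ^ 2) := by
    field_simp
  have hb' := inv_pos.mpr (abs_pos.mpr hb)
  refine ⟨hpos, add_pos hpos hmpos, ?_, ?_⟩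
  · nlinarith [mul_pos (mul_pos hK hb') (pow_pos hε 3)]
  · rw [hscaled, abs_mul, abs_inv]
    nlinarith [mul_le_mul_of_nonneg_left hbound hb'.le, mul_pos hK (pow_pos hε 3)]

theorem stmt_15 (d d' b Sig β₀ C ε₀ : ℝ)
    (hd : 0 < d) (hb : b ≠ 0) (hSig : 0 < Sig) (hC : 0 < C) (hε₀ : 0 < ε₀)
    (ap am : ℝ → ℝ)
    (hap : ∀ ε : ℝ, 0 < ε → ε ≤ ε₀ → |ap ε - d * ε - d' * ε ^ 2 / 2| ≤ C * ε ^ 3)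
    (ham : ∀ ε : ℝ, 0 < ε → ε ≤ ε₀ → |am ε - d * ε + d' * ε ^ 2 / 2| ≤ C * ε ^ 3) :
    ∃ ε₁ C₁ : ℝ, 0 < ε₁ ∧ ε₁ ≤ ε₀ ∧ 0 < C₁ ∧
      ∀ ε : ℝ, 0 < ε → ε ≤ ε₁ →
        0 < ap ε * (1 - 2 * ε * β₀) ∧
        0 < ap ε * (1 - 2 * ε * β₀) + am ε ∧
        |ap ε * (1 - 2 * ε * β₀)
            - (ap ε * (1 - 2 * ε * β₀) + am ε) *
              (Real.exp (-(b * am ε) / Sig) *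
                Real.sinh (ap ε * (1 - 2 * ε * β₀) * |b| / Sig) /
                Real.sinh ((ap ε * (1 - 2 * ε * β₀) + am ε) * |b| / Sig))
            - b * d ^ 2 / Sig * ε ^ 2| ≤ C₁ * ε ^ 3 ∧
        |1 / b *
              (ap ε * (1 - 2 * ε * β₀)
                - (ap ε * (1 - 2 * ε * β₀) + am ε) *
                  (Real.exp (-(b * am ε) / Sig) *
                    Real.sinh (ap ε * (1 - 2 * ε * β₀) * |b| / Sig) /
                    Real.sinh ((ap ε * (1 - 2 * ε * β₀) + am ε) * |b| / Sig)))
            - d ^ 2 / Sig * ε ^ 2| ≤ C₁ * ε ^ 3 :=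
  stmt_15_general d d' b Sig β₀ C ε₀ hd hb hSig hε₀ ap am hap ham
end

section
/- As ε → 0⁺, a₊(ε)·p(ε) − a₋(ε)·(1 − p(ε)) = (β₀ d + b d²/Σ)·ε² + O(ε^{3−δ}), and a₊(ε)²·p(ε) + a₋(ε)²·(1 − p(ε)) = d²·ε² + O(ε³). -/
set_option maxHeartbeats 1000000


/- STATEMENT 16: As ε → 0⁺, a₊(ε)p(ε) − a₋(ε)(1 − p(ε)) = (β₀d + bd²/Σ)ε² + O(ε^{3−δ})
and a₊(ε)²p(ε) + a₋(ε)²(1 − p(ε)) = d²ε² + O(ε³). -/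
theorem stmt_16 (d d' b Sig β₀ C δ ε₀ : ℝ)
    (hd : 0 < d) (hSig : 0 < Sig) (hC : 0 < C)
    (hδ0 : 0 < δ) (hδ1 : δ < 1) (hε₀ : 0 < ε₀)
    (ap am p : ℝ → ℝ)
    (hap : ∀ ε : ℝ, 0 < ε → ε ≤ ε₀ → |ap ε - d * ε - d' * ε ^ 2 / 2| ≤ C * ε ^ 3)
    (ham : ∀ ε : ℝ, 0 < ε → ε ≤ ε₀ → |am ε - d * ε + d' * ε ^ 2 / 2| ≤ C * ε ^ 3)
    (hp : ∀ ε : ℝ, 0 < ε → ε ≤ ε₀ →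
      |p ε - 1 / 2 - 1 / 2 * (b * d / Sig + β₀ - d' / (2 * d)) * ε|
        ≤ C * ε ^ ((2 : ℝ) - δ)) :
    ∃ ε₁ C₁ : ℝ, 0 < ε₁ ∧ ε₁ ≤ ε₀ ∧ 0 < C₁ ∧
      ∀ ε : ℝ, 0 < ε → ε ≤ ε₁ →
        |ap ε * p ε - am ε * (1 - p ε) - (β₀ * d + b * d ^ 2 / Sig) * ε ^ 2|
            ≤ C₁ * ε ^ ((3 : ℝ) - δ) ∧
        |(ap ε) ^ 2 * p ε + (am ε) ^ 2 * (1 - p ε) - d ^ 2 * ε ^ 2|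
            ≤ C₁ * ε ^ 3 := by
  set κ : ℝ := b * d / Sig + β₀ - d' / (2 * d) with hκ
  set Kp : ℝ := 1 / 2 + |κ| / 2 + C with hKp
  set K : ℝ := |d'| / 2 + C with hK
  set K₂ : ℝ := K * (K + 2 * d) with hK₂
  have hKp0 : 0 < Kp := by positivity
  have hK0 : 0 < K := by positivity
  have hK₂0 : 0 < K₂ := by positivity
  refine ⟨min ε₀ 1, 2 * d * C + 2 * C * Kp + 2 * K₂ * Kp + 1,
    lt_min hε₀ one_pos, min_le_left _ _, by positivity, ?_⟩
  intro ε hε hεle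
  have hεε₀ : ε ≤ ε₀ := hεle.trans (min_le_left _ _)
  have hε1 : ε ≤ 1 := hεle.trans (min_le_right _ _)
  -- error terms
  have hEp := hap ε hε hεε₀
  have hEm := ham ε hε hεε₀
  have hQ := hp ε hε hεε₀
  -- rpow facts
  have hrp1 : ε ^ ((2 : ℝ) - δ) ≤ ε := by
    have := Real.rpow_le_rpow_of_exponent_ge hε hε1 (by linarith : (1 : ℝ) ≤ 2 - δ)
    simpa using this
  have hrp2 : ε ^ (3 : ℕ) ≤ ε ^ ((3 : ℝ) - δ) := by
    have h3 : (ε : ℝ) ^ (3 : ℕ) = ε ^ ((3 : ℝ)) := by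
      rw [← Real.rpow_natCast ε 3]; norm_num
    rw [h3]
    exact Real.rpow_le_rpow_of_exponent_ge hε hε1 (by linarith)
  have hrp3 : ε * ε ^ ((2 : ℝ) - δ) = ε ^ ((3 : ℝ) - δ) := by
    rw [show ((3 : ℝ) - δ) = 1 + (2 - δ) by ring, Real.rpow_add hε, Real.rpow_one]
  have hrp4 : ε ^ ((2 : ℝ) - δ) ≤ 1 := hrp1.trans hε1
  have hrp0 : 0 < ε ^ ((2 : ℝ) - δ) := Real.rpow_pos_of_pos hε _
  have hε2 : ε ^ 2 ≤ ε := by nlinarith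
  have hε3 : ε ^ 3 ≤ ε ^ 2 := by nlinarith
  -- bounds on p
  have hpb : |p ε| ≤ Kp ∧ |1 - p ε| ≤ Kp := by
    have h1 : |p ε - 1 / 2| ≤ |κ| / 2 * ε + C * ε ^ ((2 : ℝ) - δ) := by
      have := abs_sub_abs_le_abs_sub (p ε - 1 / 2) (1 / 2 * κ * ε)
      have h2 : |p ε - 1 / 2 - 1 / 2 * κ * ε| ≤ C * ε ^ ((2 : ℝ) - δ) := hQ
      have h3 : |1 / 2 * κ * ε| = |κ| / 2 * ε := by
        rw [abs_mul, abs_mul, abs_of_pos hε, abs_of_pos (by norm_num : (0:ℝ) < 1/2)]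
        ring
      calc |p ε - 1 / 2| ≤ |1 / 2 * κ * ε| + |p ε - 1 / 2 - 1 / 2 * κ * ε| := by
            have := abs_add_le (1 / 2 * κ * ε) (p ε - 1 / 2 - 1 / 2 * κ * ε)
            simpa using this
        _ ≤ |κ| / 2 * ε + C * ε ^ ((2 : ℝ) - δ) := by rw [h3]; linarith
    have h4 : |p ε - 1 / 2| ≤ |κ| / 2 + C := by
      have : |κ| / 2 * ε ≤ |κ| / 2 := by nlinarith [abs_nonneg κ]
      have : C * ε ^ ((2 : ℝ) - δ) ≤ C := by nlinarith
      linarith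
    constructor
    · have := abs_sub_abs_le_abs_sub (p ε) (1 / 2 : ℝ)
      have h5 : |(1 : ℝ) / 2| = 1 / 2 := by norm_num
      calc |p ε| ≤ |(1 : ℝ) / 2| + |p ε - 1 / 2| := by
            have := abs_add_le ((1 : ℝ) / 2) (p ε - 1 / 2)
            simpa using this
        _ ≤ Kp := by rw [h5, hKp]; linarith
    · have h6 : |1 - p ε| = |p ε - 1| := abs_sub_comm _ _
      have h7 : |p ε - 1| ≤ |p ε - 1 / 2| + |(1 : ℝ) / 2| := by
        have := abs_sub (p ε - 1 / 2) (-(1 / 2 : ℝ))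
        calc |p ε - 1| = |(p ε - 1 / 2) + (-(1 / 2))| := by ring_nf
          _ ≤ |p ε - 1 / 2| + |(-(1 / 2) : ℝ)| := abs_add_le _ _
          _ = |p ε - 1 / 2| + |(1 : ℝ) / 2| := by norm_num
      rw [h6]
      have h8 : |(1 : ℝ) / 2| = 1 / 2 := by norm_num
      calc |p ε - 1| ≤ |p ε - 1 / 2| + |(1 : ℝ) / 2| := h7
        _ ≤ Kp := by rw [hKp, h8]; linarith
  obtain ⟨hp1, hp2⟩ := hpb
  have hεpos3 : (0 : ℝ) < ε ^ 3 := by positivity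
  constructor
  · -- first estimate
    have key : ap ε * p ε - am ε * (1 - p ε) - (β₀ * d + b * d ^ 2 / Sig) * ε ^ 2
        = 2 * d * ε * (p ε - 1 / 2 - 1 / 2 * κ * ε)
          + (ap ε - d * ε - d' * ε ^ 2 / 2) * p ε
          - (am ε - d * ε + d' * ε ^ 2 / 2) * (1 - p ε) := by
      rw [hκ]; field_simp; ring
    rw [key]
    have b1 : |2 * d * ε * (p ε - 1 / 2 - 1 / 2 * κ * ε)| ≤ 2 * d * C * ε ^ ((3 : ℝ) - δ) := by
      rw [abs_mul, abs_of_pos (by positivity : (0:ℝ) < 2 * d * ε)]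
      calc 2 * d * ε * |p ε - 1 / 2 - 1 / 2 * κ * ε|
          ≤ 2 * d * ε * (C * ε ^ ((2 : ℝ) - δ)) := by
            apply mul_le_mul_of_nonneg_left hQ (by positivity)
        _ = 2 * d * C * (ε * ε ^ ((2 : ℝ) - δ)) := by ring
        _ = 2 * d * C * ε ^ ((3 : ℝ) - δ) := by rw [hrp3]
    have b2 : |(ap ε - d * ε - d' * ε ^ 2 / 2) * p ε| ≤ C * Kp * ε ^ ((3 : ℝ) - δ) := by
      rw [abs_mul]
      calc |ap ε - d * ε - d' * ε ^ 2 / 2| * |p ε| ≤ C * ε ^ 3 * Kp := by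
            apply mul_le_mul hEp hp1 (abs_nonneg _) (by positivity)
        _ = C * Kp * ε ^ 3 := by ring
        _ ≤ C * Kp * ε ^ ((3 : ℝ) - δ) := by
            apply mul_le_mul_of_nonneg_left hrp2 (by positivity)
    have b3 : |(am ε - d * ε + d' * ε ^ 2 / 2) * (1 - p ε)| ≤ C * Kp * ε ^ ((3 : ℝ) - δ) := by
      rw [abs_mul]
      calc |am ε - d * ε + d' * ε ^ 2 / 2| * |1 - p ε| ≤ C * ε ^ 3 * Kp := by
            apply mul_le_mul hEm hp2 (abs_nonneg _) (by positivity)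
        _ = C * Kp * ε ^ 3 := by ring
        _ ≤ C * Kp * ε ^ ((3 : ℝ) - δ) := by
            apply mul_le_mul_of_nonneg_left hrp2 (by positivity)
    have hrpow0 : 0 < ε ^ ((3 : ℝ) - δ) := Real.rpow_pos_of_pos hε _
    calc |2 * d * ε * (p ε - 1 / 2 - 1 / 2 * κ * ε)
          + (ap ε - d * ε - d' * ε ^ 2 / 2) * p ε
          - (am ε - d * ε + d' * ε ^ 2 / 2) * (1 - p ε)|
        ≤ |2 * d * ε * (p ε - 1 / 2 - 1 / 2 * κ * ε)
            + (ap ε - d * ε - d' * ε ^ 2 / 2) * p ε|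
          + |(am ε - d * ε + d' * ε ^ 2 / 2) * (1 - p ε)| := abs_sub _ _
      _ ≤ |2 * d * ε * (p ε - 1 / 2 - 1 / 2 * κ * ε)|
          + |(ap ε - d * ε - d' * ε ^ 2 / 2) * p ε|
          + |(am ε - d * ε + d' * ε ^ 2 / 2) * (1 - p ε)| := by
            have := abs_add_le (2 * d * ε * (p ε - 1 / 2 - 1 / 2 * κ * ε))
              ((ap ε - d * ε - d' * ε ^ 2 / 2) * p ε)
            linarith
      _ ≤ 2 * d * C * ε ^ ((3 : ℝ) - δ) + C * Kp * ε ^ ((3 : ℝ) - δ)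
          + C * Kp * ε ^ ((3 : ℝ) - δ) := by linarith
      _ ≤ (2 * d * C + 2 * C * Kp + 2 * K₂ * Kp + 1) * ε ^ ((3 : ℝ) - δ) := by
            have hx : (0:ℝ) ≤ (2 * K₂ * Kp + 1) * ε ^ ((3 : ℝ) - δ) := by positivity
            nlinarith [hx]
  · -- second estimate
    have key2 : (ap ε) ^ 2 * p ε + (am ε) ^ 2 * (1 - p ε) - d ^ 2 * ε ^ 2
        = ((ap ε) ^ 2 - d ^ 2 * ε ^ 2) * p ε + ((am ε) ^ 2 - d ^ 2 * ε ^ 2) * (1 - p ε) := by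
      ring
    rw [key2]
    -- bound |ap ε - d ε| and |ap ε + d ε|
    have hap1 : |ap ε - d * ε| ≤ K * ε ^ 2 := by
      have h1 : |ap ε - d * ε| ≤ |d' * ε ^ 2 / 2| + |ap ε - d * ε - d' * ε ^ 2 / 2| := by
        have := abs_add_le (d' * ε ^ 2 / 2) (ap ε - d * ε - d' * ε ^ 2 / 2)
        simpa using this
      have h2 : |d' * ε ^ 2 / 2| = |d'| / 2 * ε ^ 2 := by
        rw [abs_div, abs_mul, abs_of_pos (by positivity : (0:ℝ) < ε ^ 2)]
        simp; ring
      have h3 : C * ε ^ 3 ≤ C * ε ^ 2 := by nlinarith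
      rw [hK]; rw [h2] at h1; nlinarith [hEp]
    have ham1 : |am ε - d * ε| ≤ K * ε ^ 2 := by
      have h1 : |am ε - d * ε| ≤ |(-(d' * ε ^ 2 / 2))| + |am ε - d * ε + d' * ε ^ 2 / 2| := by
        have := abs_add_le (-(d' * ε ^ 2 / 2)) (am ε - d * ε + d' * ε ^ 2 / 2)
        simpa using this
      have h2 : |(-(d' * ε ^ 2 / 2))| = |d'| / 2 * ε ^ 2 := by
        rw [abs_neg, abs_div, abs_mul, abs_of_pos (by positivity : (0:ℝ) < ε ^ 2)]
        simp; ring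
      have h3 : C * ε ^ 3 ≤ C * ε ^ 2 := by nlinarith
      rw [hK]; rw [h2] at h1; nlinarith [hEm]
    have hsum : ∀ f : ℝ → ℝ, |f ε - d * ε| ≤ K * ε ^ 2 →
        |f ε ^ 2 - d ^ 2 * ε ^ 2| ≤ K₂ * ε ^ 3 := by
      intro f hf
      have h1 : |f ε + d * ε| ≤ |f ε - d * ε| + 2 * d * ε := by
        have := abs_add_le (f ε - d * ε) (2 * (d * ε))
        have h2 : |2 * (d * ε)| = 2 * d * ε := by
          rw [abs_of_pos (by positivity : (0:ℝ) < 2 * (d * ε))]; ring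
        calc |f ε + d * ε| = |(f ε - d * ε) + 2 * (d * ε)| := by ring_nf
          _ ≤ |f ε - d * ε| + |2 * (d * ε)| := abs_add_le _ _
          _ = |f ε - d * ε| + 2 * d * ε := by rw [h2]
      have h3 : |f ε + d * ε| ≤ (K + 2 * d) * ε := by
        have h5 : K * ε ^ 2 ≤ K * ε := mul_le_mul_of_nonneg_left hε2 hK0.le
        have h6 : (K + 2 * d) * ε = K * ε + 2 * d * ε := by ring
        linarith
      have h4 : f ε ^ 2 - d ^ 2 * ε ^ 2 = (f ε - d * ε) * (f ε + d * ε) := by ring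
      rw [h4, abs_mul, hK₂]
      calc |f ε - d * ε| * |f ε + d * ε| ≤ (K * ε ^ 2) * ((K + 2 * d) * ε) := by
            apply mul_le_mul hf h3 (abs_nonneg _) (by positivity)
        _ = K * (K + 2 * d) * ε ^ 3 := by ring
    have hup := hsum ap hap1
    have hum := hsum am ham1
    calc |((ap ε) ^ 2 - d ^ 2 * ε ^ 2) * p ε + ((am ε) ^ 2 - d ^ 2 * ε ^ 2) * (1 - p ε)|
        ≤ |((ap ε) ^ 2 - d ^ 2 * ε ^ 2) * p ε| + |((am ε) ^ 2 - d ^ 2 * ε ^ 2) * (1 - p ε)| :=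
          abs_add_le _ _
      _ ≤ K₂ * ε ^ 3 * Kp + K₂ * ε ^ 3 * Kp := by
          rw [abs_mul, abs_mul]
          have b1 := mul_le_mul hup hp1 (abs_nonneg _) (by positivity)
          have b2 := mul_le_mul hum hp2 (abs_nonneg _) (by positivity)
          linarith
      _ ≤ (2 * d * C + 2 * C * Kp + 2 * K₂ * Kp + 1) * ε ^ 3 := by
          have hx : (0:ℝ) ≤ (2 * d * C + 2 * C * Kp + 1) * ε ^ 3 := by positivity
          have hy : (2 * d * C + 2 * C * Kp + 2 * K₂ * Kp + 1) * ε ^ 3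
              = K₂ * ε ^ 3 * Kp + K₂ * ε ^ 3 * Kp + (2 * d * C + 2 * C * Kp + 1) * ε ^ 3 := by
            ring
          linarith
end

section
/- Suppose E[ξ_k | 𝓕_{k−1}] ≥ c almost surely and E[ξ_k²] ≤ C for every k = 1, …, N. Then for every real λ with 0 ≤ λ < Nc one has P(ξ_1 + ⋯ + ξ_N ≤ λ) ≤ 4CN/(Nc − λ)². -/
/-!
Write `ξ_k = d_k + E[ξ_k | 𝓕_{k-1}]`. The increments `d_k` are martingale differences, hence
pairwise orthogonal in `L²`, and `E[d_k²] ≤ E[ξ_k²] ≤ C`, so `M = ∑ d_k` has `E[M²] ≤ CN`.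
On the event `{∑ ξ_k ≤ λ}` the predictable part `∑ E[ξ_k | 𝓕_{k-1}] ≥ Nc` forces
`|M| ≥ Nc - λ`, and Chebyshev's inequality concludes.
-/

open MeasureTheory ProbabilityTheory Finset

section

variable {Ω : Type*} {m m0 : MeasurableSpace Ω} {μ : Measure Ω}

lemma integral_sq_sum_of_orthogonal {ι : Type*} {s : Finset ι} {d : ι → Ω → ℝ}
    (hd : ∀ k ∈ s, MemLp (d k) 2 μ)
    (hortho : ∀ j ∈ s, ∀ k ∈ s, j ≠ k → ∫ ω, d j ω * d k ω ∂μ = 0) :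
    ∫ ω, (∑ k ∈ s, d k ω) ^ 2 ∂μ = ∑ k ∈ s, ∫ ω, d k ω ^ 2 ∂μ := by
  have hint : ∀ j ∈ s, ∀ k ∈ s, Integrable (fun ω => d j ω * d k ω) μ :=
    fun j hj k hk => (hd j hj).integrable_mul (hd k hk)
  calc ∫ ω, (∑ k ∈ s, d k ω) ^ 2 ∂μ = ∫ ω, ∑ j ∈ s, ∑ k ∈ s, d j ω * d k ω ∂μ := by
        simp_rw [sq, sum_mul_sum]
    _ = ∑ j ∈ s, ∑ k ∈ s, ∫ ω, d j ω * d k ω ∂μ := by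
        rw [integral_finsetSum s fun j hj => integrable_finsetSum s (hint j hj)]
        exact sum_congr rfl fun j hj => integral_finsetSum s (hint j hj)
    _ = ∑ k ∈ s, ∫ ω, d k ω ^ 2 ∂μ := by
        refine sum_congr rfl fun j hj => ?_
        rw [sum_eq_single_of_mem j hj fun k hk hkj => hortho j hj k hk hkj.symm]
        simp_rw [sq]

variable [IsFiniteMeasure μ]

lemma integral_mul_sub_condExp_eq_zero (hm : m ≤ m0) {f g : Ω → ℝ}
    (hf : MemLp f 2 μ) (hfm : StronglyMeasurable[m] f) (hg : MemLp g 2 μ) :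
    ∫ ω, f ω * (g ω - μ[g|m] ω) ∂μ = 0 := by
  have hfg : Integrable (fun ω => f ω * g ω) μ := hf.integrable_mul hg
  have hfe : Integrable (fun ω => f ω * μ[g|m] ω) μ := hf.integrable_mul (hg.condExp one_le_two)
  have hpull : ∫ ω, f ω * g ω ∂μ = ∫ ω, f ω * μ[g|m] ω ∂μ :=
    calc ∫ ω, f ω * g ω ∂μ = ∫ ω, μ[f * g|m] ω ∂μ := (integral_condExp hm).symm
      _ = ∫ ω, f ω * μ[g|m] ω ∂μ :=
        integral_congr_ae (condExp_mul_of_stronglyMeasurable_left hfm hfg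
          (hg.integrable one_le_two))
  simp_rw [mul_sub]
  rw [integral_sub hfg hfe, hpull, sub_self]

lemma integral_sq_sub_condExp_le (hm : m ≤ m0) {f : Ω → ℝ} (hf : MemLp f 2 μ) :
    ∫ ω, (f ω - μ[f|m] ω) ^ 2 ∂μ ≤ ∫ ω, f ω ^ 2 ∂μ :=
  calc ∫ ω, (f ω - μ[f|m] ω) ^ 2 ∂μ = ∫ ω, Var[f; μ | m] ω ∂μ := (integral_condExp hm).symm
    _ ≤ ∫ ω, μ[f ^ 2|m] ω ∂μ :=
      integral_mono_ae integrable_condVar integrable_condExp (condVar_ae_le_condExp_sq hm hf)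
    _ = ∫ ω, f ω ^ 2 ∂μ := integral_condExp hm

lemma integral_sq_sum_sub_condExp_le {𝓕 : ℕ → MeasurableSpace Ω} (h𝓕mono : Monotone 𝓕)
    (h𝓕le : ∀ k, 𝓕 k ≤ m0) {ξ : ℕ → Ω → ℝ} {s : Finset ℕ}
    (hξ : ∀ k ∈ s, MemLp (ξ k) 2 μ) (hξm : ∀ k ∈ s, StronglyMeasurable[𝓕 k] (ξ k)) :
    ∫ ω, (∑ k ∈ s, (ξ k ω - μ[ξ k|𝓕 (k - 1)] ω)) ^ 2 ∂μ ≤ ∑ k ∈ s, ∫ ω, ξ k ω ^ 2 ∂μ := by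
  set d : ℕ → Ω → ℝ := fun k ω => ξ k ω - μ[ξ k|𝓕 (k - 1)] ω
  have hd : ∀ k ∈ s, MemLp (d k) 2 μ := fun k hk => (hξ k hk).sub ((hξ k hk).condExp one_le_two)
  have hdm : ∀ k ∈ s, StronglyMeasurable[𝓕 k] (d k) := fun k hk =>
    (hξm k hk).sub (stronglyMeasurable_condExp.mono (h𝓕mono (Nat.sub_le k 1)))
  have hortho_lt : ∀ j ∈ s, ∀ k ∈ s, j < k → ∫ ω, d j ω * d k ω ∂μ = 0 :=
    fun j hj k hk hjk => integral_mul_sub_condExp_eq_zero (h𝓕le _) (hd j hj)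
      ((hdm j hj).mono (h𝓕mono (Nat.le_sub_one_of_lt hjk))) (hξ k hk)
  have hortho : ∀ j ∈ s, ∀ k ∈ s, j ≠ k → ∫ ω, d j ω * d k ω ∂μ = 0 := by
    intro j hj k hk hjk
    rcases hjk.lt_or_gt with hlt | hgt
    · exact hortho_lt j hj k hk hlt
    · simp_rw [mul_comm (d j _)]
      exact hortho_lt k hk j hj hgt
  rw [integral_sq_sum_of_orthogonal hd hortho]
  exact sum_le_sum fun k hk => integral_sq_sub_condExp_le (h𝓕le _) (hξ k hk)

lemma measureReal_le_integral_sq_div_sq {M : Ω → ℝ} (hM : MemLp M 2 μ) {A : Set Ω} {t : ℝ}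
    (ht : 0 < t) (hA : ∀ᵐ ω ∂μ, ω ∈ A → t ≤ |M ω|) :
    μ.real A ≤ (∫ ω, M ω ^ 2 ∂μ) / t ^ 2 := by
  have hsub : A ≤ᵐ[μ] {ω | t ^ 2 ≤ M ω ^ 2} := by
    filter_upwards [hA] with ω hω hωA
    exact sq_le_sq.2 (by rw [abs_of_pos ht]; exact hω hωA)
  rw [le_div_iff₀ (pow_pos ht 2), mul_comm]
  calc t ^ 2 * μ.real A ≤ t ^ 2 * μ.real {ω | t ^ 2 ≤ M ω ^ 2} :=
        mul_le_mul_of_nonneg_left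
          (ENNReal.toReal_mono (measure_ne_top _ _) (measure_mono_ae hsub)) (sq_nonneg t)
    _ ≤ ∫ ω, M ω ^ 2 ∂μ :=
        mul_meas_ge_le_integral_of_nonneg (ae_of_all _ fun ω => sq_nonneg _) hM.integrable_sq _

end

theorem stmt_17_general {Ω : Type*} [m0 : MeasurableSpace Ω] (P : Measure Ω)
    [IsProbabilityMeasure P]
    (N : ℕ) (𝓕 : ℕ → MeasurableSpace Ω)
    (h𝓕mono : Monotone 𝓕) (h𝓕le : ∀ k, 𝓕 k ≤ m0)
    (c C : ℝ)
    (ξ : ℕ → Ω → ℝ)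
    (hsq : ∀ k ∈ Finset.Icc 1 N, MemLp (ξ k) 2 P)
    (hmeas : ∀ k ∈ Finset.Icc 1 N, StronglyMeasurable[𝓕 k] (ξ k))
    (hcond : ∀ k ∈ Finset.Icc 1 N, ∀ᵐ ω ∂P, c ≤ (P[ξ k | 𝓕 (k - 1)]) ω)
    (hsqbd : ∀ k ∈ Finset.Icc 1 N, ∫ ω, (ξ k ω) ^ 2 ∂P ≤ C)
    (l : ℝ) (hl : l < N * c) :
    (P {ω | ∑ k ∈ Finset.Icc 1 N, ξ k ω ≤ l}).toReal
      ≤ 4 * C * N / (N * c - l) ^ 2 := by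
  set M : Ω → ℝ := fun ω => ∑ k ∈ Icc 1 N, (ξ k ω - P[ξ k | 𝓕 (k - 1)] ω)
  have hM : MemLp M 2 P := memLp_finsetSum _ fun k hk =>
    (hsq k hk).sub ((hsq k hk).condExp one_le_two)
  have hsecond : ∫ ω, M ω ^ 2 ∂P ≤ C * N :=
    (integral_sq_sum_sub_condExp_le h𝓕mono h𝓕le hsq hmeas).trans <|
      (sum_le_sum hsqbd).trans_eq (by simp [mul_comm])
  have hdev : ∀ᵐ ω ∂P, ω ∈ {ω | ∑ k ∈ Icc 1 N, ξ k ω ≤ l} → N * c - l ≤ |M ω| := by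
    filter_upwards [(ae_ball_iff (Icc 1 N).countable_toSet).2 hcond] with ω hω hωA
    have hmean : (N : ℝ) * c ≤ ∑ k ∈ Icc 1 N, P[ξ k | 𝓕 (k - 1)] ω := by
      simpa using sum_le_sum hω
    have hMω : M ω = ∑ k ∈ Icc 1 N, ξ k ω - ∑ k ∈ Icc 1 N, P[ξ k | 𝓕 (k - 1)] ω :=
      sum_sub_distrib ..
    linarith [neg_abs_le (M ω), show ∑ k ∈ Icc 1 N, ξ k ω ≤ l from hωA]
  have hCN : 0 ≤ C * N := (integral_nonneg fun ω => sq_nonneg (M ω)).trans hsecond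
  calc P.real {ω | ∑ k ∈ Icc 1 N, ξ k ω ≤ l}
      ≤ (∫ ω, M ω ^ 2 ∂P) / (N * c - l) ^ 2 :=
        measureReal_le_integral_sq_div_sq hM (sub_pos.2 hl) hdev
    _ ≤ C * N / (N * c - l) ^ 2 := by gcongr
    _ ≤ 4 * C * N / (N * c - l) ^ 2 := by
        rw [mul_assoc]; exact div_le_div_of_nonneg_right (by linarith) (sq_nonneg _)

theorem stmt_17 {Ω : Type*} [m0 : MeasurableSpace Ω] (P : Measure Ω)
    [IsProbabilityMeasure P]
    (N : ℕ) (𝓕 : ℕ → MeasurableSpace Ω)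
    (h𝓕mono : Monotone 𝓕) (h𝓕le : ∀ k, 𝓕 k ≤ m0)
    (c C : ℝ) (hc : 0 < c) (hC : 0 < C)
    (ξ : ℕ → Ω → ℝ)
    (hnonneg : ∀ k ∈ Finset.Icc 1 N, ∀ ω, 0 ≤ ξ k ω)
    (hsq : ∀ k ∈ Finset.Icc 1 N, MemLp (ξ k) 2 P)
    (hmeas : ∀ k ∈ Finset.Icc 1 N, StronglyMeasurable[𝓕 k] (ξ k))
    (hcond : ∀ k ∈ Finset.Icc 1 N, ∀ᵐ ω ∂P, c ≤ (P[ξ k | 𝓕 (k - 1)]) ω)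
    (hsqbd : ∀ k ∈ Finset.Icc 1 N, ∫ ω, (ξ k ω) ^ 2 ∂P ≤ C)
    (l : ℝ) (hl0 : 0 ≤ l) (hl : l < N * c) :
    (P {ω | ∑ k ∈ Finset.Icc 1 N, ξ k ω ≤ l}).toReal
      ≤ 4 * C * N / (N * c - l) ^ 2 :=
  stmt_17_general (m0 := m0) P N 𝓕 h𝓕mono h𝓕le c C ξ hsq hmeas hcond hsqbd l hl
end
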